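/- arXiv:2211.03599 — 8 statements merged into one kernel-verified Lean document; each statement's English description precedes it below -/
import Mathlib

section
/- Let E be a finite set, let D be a probability distribution on the subsets of E, and let β : E → ℝ≥0. Suppose that for every subset S ⊆ E one has Pr_{R∼D}[S ∩ R ≠ ∅] ≥ Σ_{i∈S} β(i). Then there exists a randomized selection rule σ assigning to each subset R ⊆ E a random element σ(R) ∈ R ∪ {none} (i.e., a probability distribution on R together with the possibility of selecting nothing), such that (i) for every i ∈ E, Pr_{R∼D}[σ(R) = i] ≥ β(i), and (ii) σ is monotone: for any i ∈ E and any sets S₁ ⊆ S₂ ⊆ E with i ∈ S₁, the probability that σ selects i from S₂ is at most the probability that σ selects i from S₁. -/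
/-!
The marginal vectors `i ↦ Pr_{R∼D}[σ(R) = i]` of monotone selection rules `σ` form a compact
convex set, so by Hahn–Banach it suffices to beat every linear functional `w`: to find a monotone
rule `σ` with `∑ wᵢ bᵢ ≤ ∑ wᵢ Pr[σ(R) = i]`. The greedy rule that picks the first element of `R`
in a list of the `i` with `wᵢ > 0`, sorted by decreasing weight, does this: its expected weight
is `∑ₖ w_{iₖ} (h(Pₖ) - h(Pₖ₋₁))`, where `Pₖ` is the `k`-th prefix of the list and
`h(S) = Pr[S ∩ R ≠ ∅]`, and summation by parts against `∑ᵢ∈Pₖ bᵢ ≤ h(Pₖ)` compares it with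
`∑ wᵢ bᵢ`.
-/

open Finset Matrix

section Separation

variable {ι : Type*} [Fintype ι] [DecidableEq ι]

theorem mem_of_forall_exists_dotProduct_le {s : Set (ι → ℝ)} (hs : IsCompact s)
    (hconv : Convex ℝ s) {x : ι → ℝ} (h : ∀ w : ι → ℝ, ∃ y ∈ s, w ⬝ᵥ x ≤ w ⬝ᵥ y) : x ∈ s := by
  by_contra hx
  obtain ⟨F, u, hFs, hFx⟩ := geometric_hahn_banach_closed_point hconv hs.isClosed hx
  set w : ι → ℝ := fun i => F fun j => if i = j then 1 else 0
  have hF : ∀ z, F z = w ⬝ᵥ z := fun z => by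
    rw [← F.coe_coe, LinearMap.pi_apply_eq_sum_univ, dotProduct]
    exact sum_congr rfl fun i _ => by simp [w, mul_comm]
  obtain ⟨y, hy, hxy⟩ := h w
  linarith [hFs y hy, hF x, hF y]

end Separation

theorem List.exists_nodup_toFinset_pairwise {α β : Type*} [DecidableEq α] [LinearOrder β]
    (s : Finset α) (w : α → β) :
    ∃ l : List α, l.Nodup ∧ l.toFinset = s ∧ l.Pairwise (fun a c => w c ≤ w a) := by
  have hperm := List.mergeSort_perm s.toList (fun a c => decide (w c ≤ w a))
  refine ⟨_, hperm.nodup_iff.2 s.nodup_toList, ?_, ?_⟩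
  · ext i
    simp [hperm.mem_iff]
  · simpa using List.pairwise_mergeSort (le := fun a c => decide (w c ≤ w a))
      (fun a b c h₁ h₂ => by simp only [decide_eq_true_eq] at *; exact h₂.trans h₁)
      (fun a b => by simpa using le_total _ _) s.toList

section SummationByParts

variable {α : Type*} [DecidableEq α]

def weightedIncrements (w : α → ℝ) (h : Finset α → ℝ) : Finset α → List α → ℝ
  | _, [] => 0
  | B, i :: l => w i * (h (insert i B) - h B) + weightedIncrements w h (insert i B) l

theorem sum_map_mul_add_le_weightedIncrements {w b : α → ℝ} {h : Finset α → ℝ}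
    (hb : ∀ S, ∑ i ∈ S, b i ≤ h S) {l : List α} (hl : l.Pairwise (fun a c => w c ≤ w a))
    (hnd : l.Nodup) (hw : ∀ i ∈ l, 0 ≤ w i) {B : Finset α} (hB : ∀ i ∈ l, i ∉ B) {v : ℝ}
    (hv0 : 0 ≤ v) (hv : ∀ i ∈ l, w i ≤ v) :
    (l.map fun i => w i * b i).sum + v * ∑ i ∈ B, b i ≤ weightedIncrements w h B l + v * h B := by
  induction l generalizing B v with
  | nil => simpa [weightedIncrements] using mul_le_mul_of_nonneg_left (hb B) hv0
  | cons i l ih =>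
    obtain ⟨hil, hl⟩ := List.pairwise_cons.1 hl
    obtain ⟨hi, hnd⟩ := List.nodup_cons.1 hnd
    have hiB : i ∉ B := hB i List.mem_cons_self
    have hB' : ∀ j ∈ l, j ∉ insert i B := fun j hj => by
      simpa [hB j (List.mem_cons_of_mem _ hj)] using ne_of_mem_of_not_mem hj hi
    have ih' := ih hl hnd (fun j hj => hw j (List.mem_cons_of_mem _ hj)) hB'
      (hw i List.mem_cons_self) hil
    rw [sum_insert hiB] at ih'
    have := mul_le_mul_of_nonneg_left (sub_nonneg.2 (hb B)) (sub_nonneg.2 (hv i List.mem_cons_self))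
    simp only [List.map_cons, List.sum_cons, weightedIncrements]
    linarith

end SummationByParts

section Greedy

variable {α : Type*} [DecidableEq α]

def greedyRule : List α → Finset α → α → ℝ
  | [], _ => 0
  | i :: l, R => if i ∈ R then Pi.single i 1 else greedyRule l R

theorem greedyRule_nonneg (l : List α) (R : Finset α) (j : α) : 0 ≤ greedyRule l R j := by
  induction l with
  | nil => simp [greedyRule]
  | cons i l ih =>
    unfold greedyRule
    split_ifs
    · by_cases h : j = i <;> simp [h]
    · exact ih

theorem greedyRule_eq_zero_of_notMem {l : List α} {R : Finset α} {j : α} (hj : j ∉ R) :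
    greedyRule l R j = 0 := by
  induction l with
  | nil => simp [greedyRule]
  | cons i l ih =>
    unfold greedyRule
    split_ifs with hi
    · exact Pi.single_eq_of_ne (by rintro rfl; exact hj hi) _
    · exact ih

theorem greedyRule_anti {l : List α} {S₁ S₂ : Finset α} {j : α} (hj : j ∈ S₁) (hS : S₁ ⊆ S₂) :
    greedyRule l S₂ j ≤ greedyRule l S₁ j := by
  induction l with
  | nil => simp [greedyRule]
  | cons i l ih =>
    unfold greedyRule
    by_cases h₁ : i ∈ S₁
    · simp [h₁, hS h₁]
    by_cases h₂ : i ∈ S₂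
    · rw [if_pos h₂, if_neg h₁, Pi.single_eq_of_ne (by rintro rfl; exact h₁ hj)]
      exact greedyRule_nonneg l S₁ j
    · simpa [h₁, h₂] using ih

variable [Fintype α]

theorem sum_greedyRule_le_one (l : List α) (R : Finset α) : ∑ j, greedyRule l R j ≤ 1 := by
  induction l with
  | nil => simp [greedyRule]
  | cons i l ih =>
    unfold greedyRule
    split_ifs
    · simp
    · exact ih

theorem dotProduct_greedyRule_cons (w : α → ℝ) (i : α) (l : List α) (R : Finset α) :
    w ⬝ᵥ greedyRule (i :: l) R = if i ∈ R then w i else w ⬝ᵥ greedyRule l R := by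
  rw [greedyRule]
  split_ifs <;> simp

def hitProb (D : Finset α → ℝ) (S : Finset α) : ℝ :=
  ∑ R ∈ univ.filter (fun R => (S ∩ R).Nonempty), D R

theorem hitProb_insert_sub (D : Finset α → ℝ) (i : α) (B : Finset α) :
    hitProb D (insert i B) - hitProb D B =
      ∑ R ∈ univ.filter (fun R => ¬(B ∩ R).Nonempty ∧ i ∈ R), D R := by
  simp only [hitProb, sum_filter, ← sum_sub_distrib]
  refine sum_congr rfl fun R _ => ?_
  by_cases hi : i ∈ R <;> by_cases hB : (B ∩ R).Nonempty <;> simp [hi, hB]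

theorem sum_avoiding_dotProduct_greedyRule (D : Finset α → ℝ) (w : α → ℝ) (B : Finset α)
    (l : List α) :
    ∑ R ∈ univ.filter (fun R => ¬(B ∩ R).Nonempty), D R * (w ⬝ᵥ greedyRule l R) =
      weightedIncrements w (hitProb D) B l := by
  induction l generalizing B with
  | nil => simp [greedyRule, weightedIncrements]
  | cons i l ih =>
    rw [weightedIncrements, ← ih, hitProb_insert_sub, mul_sum]
    simp only [sum_filter, dotProduct_greedyRule_cons, ← sum_add_distrib]
    refine sum_congr rfl fun R _ => ?_
    by_cases hi : i ∈ R <;> by_cases hB : (B ∩ R).Nonempty <;> simp [hi, hB, mul_comm]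

end Greedy

section MonotoneRules

variable {α : Type*} [Fintype α]

variable (α) in
def monotoneRules : Set (Finset α → α → ℝ) :=
  {σ | (∀ R i, 0 ≤ σ R i) ∧ (∀ R i, i ∉ R → σ R i = 0) ∧ (∀ R, ∑ i, σ R i ≤ 1) ∧
    (∀ i S₁ S₂, i ∈ S₁ → S₁ ⊆ S₂ → σ S₂ i ≤ σ S₁ i)}

theorem isClosed_monotoneRules : IsClosed (monotoneRules α) := by
  simp only [monotoneRules, Set.ofPred_and, Set.ofPred_forall]
  repeat' first
    | apply IsClosed.inter
    | (apply isClosed_iInter; intro)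
    | (apply isClosed_le <;> fun_prop)
    | (apply isClosed_eq <;> fun_prop)

theorem isCompact_monotoneRules : IsCompact (monotoneRules α) := by
  refine isCompact_Icc.of_isClosed_subset isClosed_monotoneRules (s := Set.Icc 0 1) ?_
  rintro σ ⟨hσ0, -, hσ1, -⟩
  exact ⟨hσ0, fun R i => (single_le_sum (fun j _ => hσ0 R j) (mem_univ i)).trans (hσ1 R)⟩

theorem convex_monotoneRules : Convex ℝ (monotoneRules α) := by
  rintro σ ⟨hσ0, hσR, hσ1, hσm⟩ τ ⟨hτ0, hτR, hτ1, hτm⟩ a c ha hc hac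
  refine ⟨fun R i => ?_, fun R i hi => ?_, fun R => ?_, fun i S₁ S₂ hi hS => ?_⟩ <;>
    simp only [Pi.add_apply, Pi.smul_apply, smul_eq_mul]
  · have := hσ0 R i
    have := hτ0 R i
    positivity
  · simp [hσR R i hi, hτR R i hi]
  · rw [sum_add_distrib, ← mul_sum, ← mul_sum]
    nlinarith [hσ1 R, hτ1 R]
  · gcongr
    exacts [hσm i S₁ S₂ hi hS, hτm i S₁ S₂ hi hS]

theorem greedyRule_mem_monotoneRules [DecidableEq α] (l : List α) : greedyRule l ∈ monotoneRules α :=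
  ⟨greedyRule_nonneg l, fun _ _ => greedyRule_eq_zero_of_notMem, sum_greedyRule_le_one l,
    fun _ _ _ => greedyRule_anti⟩

def marginal (D : Finset α → ℝ) : (Finset α → α → ℝ) →ₗ[ℝ] α → ℝ where
  toFun σ i := ∑ R, D R * σ R i
  map_add' σ τ := by
    ext i
    simp [mul_add, sum_add_distrib]
  map_smul' c σ := by
    ext i
    simp [mul_sum, mul_left_comm]

theorem dotProduct_marginal (D : Finset α → ℝ) (w : α → ℝ) (σ : Finset α → α → ℝ) :
    w ⬝ᵥ marginal D σ = ∑ R, D R * (w ⬝ᵥ σ R) := by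
  simp only [dotProduct, marginal, LinearMap.coe_mk, AddHom.coe_mk, mul_sum]
  rw [sum_comm]
  exact sum_congr rfl fun R _ => sum_congr rfl fun i _ => by ring

theorem exists_mem_monotoneRules_dotProduct_le [DecidableEq α] {D : Finset α → ℝ} {b : α → ℝ}
    (hb0 : ∀ i, 0 ≤ b i) (hcov : ∀ S, ∑ i ∈ S, b i ≤ hitProb D S) (w : α → ℝ) :
    ∃ σ ∈ monotoneRules α, w ⬝ᵥ b ≤ w ⬝ᵥ marginal D σ := by
  set P := univ.filter fun i => 0 < w i
  obtain ⟨l, hnd, hlP, hl⟩ := List.exists_nodup_toFinset_pairwise P w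
  have hmem : ∀ i ∈ l, i ∈ P := fun i hi => hlP ▸ List.mem_toFinset.2 hi
  have hw : ∀ i ∈ l, 0 ≤ w i := fun i hi => (mem_filter.1 (hmem i hi)).2.le
  refine ⟨greedyRule l, greedyRule_mem_monotoneRules l, ?_⟩
  calc w ⬝ᵥ b ≤ ∑ i ∈ P, w i * b i := by
        rw [dotProduct, ← sum_filter_add_sum_filter_not univ (fun i => 0 < w i)]
        refine add_le_of_nonpos_right (sum_nonpos fun i hi => ?_)
        exact mul_nonpos_of_nonpos_of_nonneg (not_lt.1 (mem_filter.1 hi).2) (hb0 i)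
    _ = (l.map fun i => w i * b i).sum := by rw [← hlP, List.sum_toFinset _ hnd]
    _ ≤ weightedIncrements w (hitProb D) ∅ l := by
        simpa [hitProb] using sum_map_mul_add_le_weightedIncrements hcov hl hnd hw
          (fun i _ => notMem_empty i) (sum_nonneg fun i hi => (mem_filter.1 hi).2.le)
          fun i hi => single_le_sum (fun j hj => (mem_filter.1 hj).2.le) (hmem i hi)
    _ = w ⬝ᵥ marginal D (greedyRule l) := by
        simpa [dotProduct_marginal] using (sum_avoiding_dotProduct_greedyRule D w ∅ l).symm

end MonotoneRules

theorem stmt_0_general (α : Type) [Fintype α] [DecidableEq α]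
    (D : Finset α → ℝ)
    (b : α → ℝ) (hb0 : ∀ i, 0 ≤ b i)
    (hcov : ∀ S : Finset α,
      ∑ R ∈ Finset.univ.filter (fun R : Finset α => (S ∩ R).Nonempty), D R ≥
        ∑ i ∈ S, b i) :
    ∃ σ : Finset α → α → ℝ,
      (∀ R i, 0 ≤ σ R i) ∧
      (∀ R i, i ∉ R → σ R i = 0) ∧
      (∀ R, ∑ i : α, σ R i ≤ 1) ∧
      (∀ i : α, ∑ R : Finset α, D R * σ R i ≥ b i) ∧
      (∀ i : α, ∀ S₁ S₂ : Finset α, i ∈ S₁ → S₁ ⊆ S₂ → σ S₂ i ≤ σ S₁ i) := by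
  have hb : b ∈ marginal D '' monotoneRules α :=
    mem_of_forall_exists_dotProduct_le
      (isCompact_monotoneRules.image (marginal D).continuous_of_finiteDimensional)
      (convex_monotoneRules.linear_image (marginal D)) fun w => by
        obtain ⟨σ, hσ, hle⟩ := exists_mem_monotoneRules_dotProduct_le hb0 hcov w
        exact ⟨_, Set.mem_image_of_mem _ hσ, hle⟩
  obtain ⟨σ, ⟨hσ0, hσR, hσ1, hσm⟩, rfl⟩ := hb
  exact ⟨σ, hσ0, hσR, hσ1, fun i => le_rfl, hσm⟩

/-- Contention resolution for one element. `D` is a probability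
distribution on subsets of a finite set `α` (given by its mass function), and
`b : α → ℝ≥0` (nonnegative weights). If for every `S ⊆ α` the probability that
`S` meets a random set `R ∼ D` is at least `Σ_{i∈S} b i`, then there is a
(randomized) selection rule `σ` — `σ R i` is the probability of selecting `i`
from the realization `R`, with total mass at most `1` (the remaining mass
selects nothing) and support contained in `R` — such that
(i) `Pr_{R∼D}[σ(R) = i] ≥ b i` for every `i`, and
(ii) `σ` is monotone: for `i ∈ S₁ ⊆ S₂`, the probability of selecting `i` from
`S₂` is at most that from `S₁`. -/
theorem stmt_0 (α : Type) [Fintype α] [DecidableEq α]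
    (D : Finset α → ℝ) (hD0 : ∀ R, 0 ≤ D R) (hD1 : ∑ R : Finset α, D R = 1)
    (b : α → ℝ) (hb0 : ∀ i, 0 ≤ b i)
    (hcov : ∀ S : Finset α,
      ∑ R ∈ Finset.univ.filter (fun R : Finset α => (S ∩ R).Nonempty), D R ≥
        ∑ i ∈ S, b i) :
    ∃ σ : Finset α → α → ℝ,
      (∀ R i, 0 ≤ σ R i) ∧
      (∀ R i, i ∉ R → σ R i = 0) ∧
      (∀ R, ∑ i : α, σ R i ≤ 1) ∧
      (∀ i : α, ∑ R : Finset α, D R * σ R i ≥ b i) ∧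
      (∀ i : α, ∀ S₁ S₂ : Finset α, i ∈ S₁ → S₁ ⊆ S₂ → σ S₂ i ≤ σ S₁ i) :=
  stmt_0_general α D b hb0 hcov
end

section
/- For every finite bipartite graph G = (V, E) and every fractional matching x on G, there exists a contention resolution scheme σ such that for every edge e ∈ E with x_e > 0, Pr[e ∈ σ(R(x)) | e ∈ R(x)] ≥ 1 − e^{−(1−1/e)} (≈ 0.468). -/
open Finset

lemma expcomb {a X : ℝ} (h0 : 0 ≤ X) (h1 : X ≤ 1) :
    X * (1 - Real.exp (-a)) ≤ 1 - Real.exp (-(a * X)) := by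
  have h := convexOn_exp.2 (Set.mem_univ (-a)) (Set.mem_univ 0)
    h0 (show (0:ℝ) ≤ 1 - X by linarith) (by ring)
  simp only [smul_eq_mul, mul_zero, add_zero, Real.exp_zero, mul_one] at h
  have h2 : X * -a = -(a*X) := by ring
  rw [h2] at h
  linarith

lemma hall_bound {γ : Type} [Fintype γ] [DecidableEq γ] (p : γ → ℝ) (c : ℝ) (hc : 0 < c)
    (h0 : ∀ i, 0 ≤ p i) (h1 : ∀ i, p i ≤ 1) (hsum : ∑ i, p i ≤ c) (F : Finset γ) :
    (1 - Real.exp (-c)) / c * ∑ i ∈ F, p i ≤ 1 - ∏ i ∈ F, (1 - p i) := by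
  set X := ∑ i ∈ F, p i with hX
  have hX0 : 0 ≤ X := sum_nonneg fun i _ => h0 i
  have hXc : X ≤ c := by
    refine le_trans ?_ hsum
    exact sum_le_sum_of_subset_of_nonneg (subset_univ F) (fun i _ _ => h0 i)
  have hprod : ∏ i ∈ F, (1 - p i) ≤ Real.exp (-X) := by
    have h2 : ∏ i ∈ F, (1 - p i) ≤ ∏ i ∈ F, Real.exp (-(p i)) := by
      refine prod_le_prod (fun i _ => by linarith [h1 i]) (fun i _ => ?_)
      linarith [Real.add_one_le_exp (-(p i))]
    rw [← Real.exp_sum] at h2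
    have h3 : ∑ i ∈ F, -p i = -X := by rw [hX, ← sum_neg_distrib]
    rwa [h3] at h2
  have hconv : (X / c) * (1 - Real.exp (-c)) ≤ 1 - Real.exp (-(c * (X / c))) :=
    expcomb (div_nonneg hX0 (le_of_lt hc)) ((div_le_one hc).2 hXc)
  rw [mul_div_cancel₀ X (ne_of_gt hc)] at hconv
  have heq : (1 - Real.exp (-c)) / c * X = (X / c) * (1 - Real.exp (-c)) := by ring
  linarith [heq.le, heq.ge]

lemma kernel_sum {γ δ : Type} [Fintype γ] [Fintype δ] (μ : γ → ℝ) (s : γ → δ → ℝ)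
    (hs : ∀ q d, 0 ≤ s q d) (hcap : ∀ q, ∑ d, s q d ≤ μ q) (d : δ) :
    ∑ q, μ q * (if μ q = 0 then 0 else s q d / μ q) = ∑ q, s q d := by
  refine sum_congr rfl fun q _ => ?_
  split_ifs with h
  · rw [h, zero_mul]
    have h1 : s q d ≤ ∑ d', s q d' := single_le_sum (fun d' _ => hs q d') (mem_univ d)
    have h2 : ∑ d', s q d' ≤ 0 := le_of_le_of_eq (hcap q) h
    linarith [hs q d]
  · rw [mul_comm, div_mul_cancel₀ _ h]

variable {γ : Type} [Fintype γ] [DecidableEq γ]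

noncomputable def bw (p : γ → ℝ) (B : Finset γ) : ℝ :=
  (∏ i ∈ B, p i) * ∏ i ∈ Bᶜ, (1 - p i)

theorem sum_bw (p : γ → ℝ) : ∑ B : Finset γ, bw p B = 1 := by
  have h := Finset.prod_add p (fun i => 1 - p i) (univ : Finset γ)
  calc ∑ B : Finset γ, bw p B
      = ∑ B ∈ univ.powerset, (∏ i ∈ B, p i) * ∏ i ∈ univ \ B, (1 - p i) := by
        rw [powerset_univ]
        exact sum_congr rfl fun B _ => by rw [bw, compl_eq_univ_sdiff]
    _ = ∏ i : γ, (p i + (1 - p i)) := h.symm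
    _ = 1 := by simp

theorem bw_nonneg (p : γ → ℝ) (h0 : ∀ i, 0 ≤ p i) (h1 : ∀ i, p i ≤ 1) (B : Finset γ) :
    0 ≤ bw p B :=
  mul_nonneg (prod_nonneg fun i _ => h0 i) (prod_nonneg fun i _ => by linarith [h1 i])

theorem sum_bw_disj (p : γ → ℝ) (F : Finset γ) :
    ∑ B ∈ univ.filter (fun B : Finset γ => ¬ (B ∩ F).Nonempty), bw p B
      = ∏ i ∈ F, (1 - p i) := by
  have hset : univ.filter (fun B : Finset γ => ¬ (B ∩ F).Nonempty) = Fᶜ.powerset := by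
    ext B
    simp only [mem_filter, mem_univ, true_and, mem_powerset, not_nonempty_iff_eq_empty,
      ← disjoint_iff_inter_eq_empty]
    constructor
    · intro h i hi
      simp only [mem_compl]
      exact fun hiF => (Finset.disjoint_left.1 h) hi hiF
    · intro h
      exact Finset.disjoint_left.2 fun i hi hiF => (mem_compl.1 (h hi)) hiF
  rw [hset]
  have key : ∀ B ∈ Fᶜ.powerset, bw p B
      = (∏ i ∈ F, (1 - p i)) * ((∏ i ∈ B, p i) * ∏ i ∈ Fᶜ \ B, (1 - p i)) := by
    intro B hB
    rw [mem_powerset] at hB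
    have hsplit : Bᶜ = F ∪ (Fᶜ \ B) := by
      ext i
      simp only [mem_compl, mem_union, mem_sdiff]
      by_cases hiF : i ∈ F
      · simp only [hiF, true_or, iff_true]
        exact fun hiB => (mem_compl.1 (hB hiB)) hiF
      · simp [hiF]
    have hdisj : Disjoint F (Fᶜ \ B) :=
      disjoint_compl_right.mono_right sdiff_subset
    rw [bw, hsplit, prod_union hdisj]
    ring
  rw [sum_congr rfl key, ← mul_sum, ← Finset.prod_add p (fun i => 1 - p i) Fᶜ]
  simp

theorem sum_bw_inter (p : γ → ℝ) (F : Finset γ) :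
    ∑ B ∈ univ.filter (fun B : Finset γ => (B ∩ F).Nonempty), bw p B
      = 1 - ∏ i ∈ F, (1 - p i) := by
  have h := sum_filter_add_sum_filter_not (univ : Finset (Finset γ))
    (fun B => (B ∩ F).Nonempty) (bw p)
  rw [sum_bw_disj] at h
  have := sum_bw p
  linarith

section Flow
variable {P I : Type} [Fintype P] [DecidableEq P] [Fintype I] [DecidableEq I]

def Np (adj : P → Finset I) (F : Finset I) : Finset P :=
  univ.filter fun p => ((adj p) ∩ F).Nonempty

lemma mem_Np {adj : P → Finset I} {F : Finset I} {p : P} :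
    p ∈ Np adj F ↔ ∃ i ∈ F, i ∈ adj p := by
  simp only [Np, mem_filter, mem_univ, true_and, Finset.Nonempty, mem_inter]
  tauto

lemma Np_union {adj : P → Finset I} (F G : Finset I) :
    Np adj (F ∪ G) = Np adj F ∪ Np adj G := by
  ext p
  simp only [mem_Np, mem_union]
  constructor
  · rintro ⟨i, hi | hi, ha⟩
    exacts [Or.inl ⟨i, hi, ha⟩, Or.inr ⟨i, hi, ha⟩]
  · rintro (⟨i, hi, ha⟩ | ⟨i, hi, ha⟩)
    exacts [⟨i, Or.inl hi, ha⟩, ⟨i, Or.inr hi, ha⟩]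

lemma Np_mono {adj : P → Finset I} {F G : Finset I} (h : F ⊆ G) :
    Np adj F ⊆ Np adj G := by
  intro p hp; rw [mem_Np] at hp ⊢; obtain ⟨i, hi, ha⟩ := hp; exact ⟨i, h hi, ha⟩

lemma meas_step {a b pos C n : ℕ} (hb : b + 1 ≤ a) (hpos : pos ≤ C)
    (h : a * (C + 1) ≤ n) : b * (C + 1) + pos + 1 ≤ n := by
  have h2 : (b + 1) * (C + 1) ≤ a * (C + 1) := Nat.mul_le_mul_right _ hb
  have h3 : (b + 1) * (C + 1) = b * (C + 1) + C + 1 := by ring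
  omega

theorem flow_aux (adj : P → Finset I) : ∀ (n : ℕ) (D : Finset I) (μ : P → ℝ) (t : I → ℝ),
    D.card * (Fintype.card P + 1) + (univ.filter (fun p => μ p ≠ 0)).card ≤ n →
    (∀ p, 0 ≤ μ p) → (∀ i, 0 ≤ t i) →
    (∀ F ⊆ D, ∑ i ∈ F, t i ≤ ∑ p ∈ Np adj F, μ p) →
    ∃ s : P → I → ℝ, (∀ p i, 0 ≤ s p i) ∧ (∀ p i, s p i ≠ 0 → i ∈ adj p ∧ i ∈ D) ∧
      (∀ p, ∑ i, s p i ≤ μ p) ∧ (∀ i ∈ D, ∑ p, s p i = t i) := by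
  intro n
  induction n using Nat.strong_induction_on with
  | _ n IH =>
  intro D μ t hm hμ ht hall
  set C := Fintype.card P with hC
  -- trivial case : D = ∅
  rcases eq_or_ne D ∅ with hD | hD
  · exact ⟨fun _ _ => 0, fun _ _ => le_refl 0, fun p i h => absurd rfl h,
      fun p => by simpa using hμ p, by simp [hD]⟩
  have hDne : D.Nonempty := nonempty_iff_ne_empty.2 hD
  have hDcard : 1 ≤ D.card := card_pos.2 hDne
  have hposC : ∀ μ' : P → ℝ, (univ.filter (fun p => μ' p ≠ 0)).card ≤ C := by
    intro μ'; simpa [hC] using card_filter_le (univ : Finset P) _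
  have hDn : D.card * (C + 1) ≤ n := by
    have := hm; omega
  have hn1 : 1 ≤ n := le_trans (by nlinarith [hDcard]) hDn
  -- the split construction, given a tight proper nonempty subset
  have split : ∀ (μ' : P → ℝ) (t' : I → ℝ) (F : Finset I),
      (∀ p, 0 ≤ μ' p) → (∀ i, 0 ≤ t' i) →
      (∀ G ⊆ D, ∑ i ∈ G, t' i ≤ ∑ p ∈ Np adj G, μ' p) →
      F ⊆ D → F.Nonempty → F ≠ D →
      (∑ i ∈ F, t' i = ∑ p ∈ Np adj F, μ' p) →
      ∃ s : P → I → ℝ, (∀ p i, 0 ≤ s p i) ∧ (∀ p i, s p i ≠ 0 → i ∈ adj p ∧ i ∈ D) ∧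
        (∀ p, ∑ i, s p i ≤ μ' p) ∧ (∀ i ∈ D, ∑ p, s p i = t' i) := by
    intro μ' t' F hμ' ht' hall' hFD hFne hFneD htight
    have hFcard : F.card + 1 ≤ D.card :=
      Nat.succ_le_of_lt (card_lt_card (Finset.ssubset_iff_subset_ne.2 ⟨hFD, hFneD⟩))
    -- instance 1 : demands F
    obtain ⟨s₁, h1n, h1s, h1c, h1d⟩ := IH (n-1) (by omega) F μ' t'
      (by have := meas_step hFcard (hposC μ') hDn; omega)
      hμ' ht' (fun G hG => hall' G (hG.trans hFD))
    set used : P → ℝ := fun p => ∑ i, s₁ p i with hused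
    have husednn : ∀ p, 0 ≤ used p := fun p => sum_nonneg fun i _ => h1n p i
    have husupp : ∀ p, p ∉ Np adj F → used p = 0 := by
      intro p hp
      refine sum_eq_zero fun i _ => ?_
      by_contra h
      obtain ⟨ha, hi⟩ := h1s p i h
      exact hp (mem_Np.2 ⟨i, hi, ha⟩)
    set μ'' : P → ℝ := fun p => μ' p - used p with hμ''def
    have hμ''nn : ∀ p, 0 ≤ μ'' p := fun p => sub_nonneg.2 (h1c p)
    -- Hall for instance 2
    have hall2 : ∀ G ⊆ D \ F, ∑ i ∈ G, t' i ≤ ∑ p ∈ Np adj G, μ'' p := by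
      intro G hG
      have hGD : G ⊆ D := hG.trans (sdiff_subset)
      have hdisjGF : Disjoint G F := by
        refine disjoint_left.2 fun i hi hiF => ?_
        exact (mem_sdiff.1 (hG hi)).2 hiF
      have step1 : ∑ p ∈ Np adj G \ Np adj F, μ'' p ≤ ∑ p ∈ Np adj G, μ'' p :=
        sum_le_sum_of_subset_of_nonneg sdiff_subset (fun p _ _ => hμ''nn p)
      have step2 : ∑ p ∈ Np adj G \ Np adj F, μ'' p = ∑ p ∈ Np adj G \ Np adj F, μ' p := by
        refine sum_congr rfl fun p hp => ?_
        have : used p = 0 := husupp p (mem_sdiff.1 hp).2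
        simp [hμ''def, this]
      have hsd : Np adj G \ Np adj F = Np adj (G ∪ F) \ Np adj F := by
        rw [Np_union]; ext p; simp only [mem_sdiff, mem_union]; tauto
      have step3 : ∑ p ∈ Np adj G \ Np adj F, μ' p
          = ∑ p ∈ Np adj (G ∪ F), μ' p - ∑ p ∈ Np adj F, μ' p := by
        rw [hsd, eq_sub_iff_add_eq, sum_sdiff (Np_mono subset_union_right)]
      have step4 : ∑ i ∈ G ∪ F, t' i ≤ ∑ p ∈ Np adj (G ∪ F), μ' p :=
        hall' _ (union_subset hGD hFD)
      have step5 : ∑ i ∈ G ∪ F, t' i = ∑ i ∈ G, t' i + ∑ i ∈ F, t' i :=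
        sum_union hdisjGF
      linarith
    have hDFcard : (D \ F).card + 1 ≤ D.card := by
      have h1 : (D \ F).card = D.card - F.card := card_sdiff_of_subset hFD
      have h2 : 1 ≤ F.card := card_pos.2 hFne
      omega
    obtain ⟨s₂, h2n, h2s, h2c, h2d⟩ := IH (n-1) (by omega) (D \ F) μ'' t'
      (by have := meas_step hDFcard (hposC μ'') hDn; omega)
      hμ''nn ht' hall2
    refine ⟨fun p i => s₁ p i + s₂ p i, fun p i => add_nonneg (h1n p i) (h2n p i), ?_, ?_, ?_⟩
    · intro p i h
      rcases eq_or_ne (s₁ p i) 0 with h1 | h1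
      · rcases eq_or_ne (s₂ p i) 0 with h2 | h2
        · exact absurd (show s₁ p i + s₂ p i = 0 by rw [h1, h2, add_zero]) (by exact h)
        · obtain ⟨ha, hd⟩ := h2s p i h2; exact ⟨ha, (mem_sdiff.1 hd).1⟩
      · obtain ⟨ha, hd⟩ := h1s p i h1; exact ⟨ha, hFD hd⟩
    · intro p
      rw [sum_add_distrib]
      have := h2c p
      simp only [hμ''def] at this
      linarith [h2c p]
    · intro i hi
      rw [sum_add_distrib]
      by_cases hiF : i ∈ F
      · have : ∑ p, s₂ p i = 0 := sum_eq_zero fun p _ => by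
          by_contra h
          exact (mem_sdiff.1 (h2s p i h).2).2 hiF
        rw [this, add_zero]; exact h1d i hiF
      · have : ∑ p, s₁ p i = 0 := sum_eq_zero fun p _ => by
          by_contra h
          exact hiF (h1s p i h).2
        rw [this, zero_add]; exact h2d i (mem_sdiff.2 ⟨hi, hiF⟩)
  -- main case distinction
  by_cases htight : ∃ F ⊆ D, F.Nonempty ∧ F ≠ D ∧ ∑ i ∈ F, t i = ∑ p ∈ Np adj F, μ p
  · obtain ⟨F, hFD, hFne, hFneD, ht'⟩ := htight
    exact split μ t F hμ ht hall hFD hFne hFneD ht'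
  push_neg at htight
  by_cases hz : ∀ i ∈ D, t i = 0
  · refine ⟨fun _ _ => 0, fun _ _ => le_refl 0, fun p i h => absurd rfl h,
      fun p => by simpa using hμ p, fun i hi => by simpa using (hz i hi).symm⟩
  push_neg at hz
  obtain ⟨i₀, hi₀D, hti₀⟩ := hz
  have hti₀pos : 0 < t i₀ := lt_of_le_of_ne (ht i₀) (Ne.symm hti₀)
  -- find p₀
  have hsum : t i₀ ≤ ∑ p ∈ Np adj {i₀}, μ p := by
    simpa using hall {i₀} (singleton_subset_iff.2 hi₀D)
  obtain ⟨p₀, hp₀mem, hp₀ne⟩ : ∃ p ∈ Np adj {i₀}, μ p ≠ 0 := by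
    apply exists_ne_zero_of_sum_ne_zero
    intro h; rw [h] at hsum; linarith
  have hp₀adj : i₀ ∈ adj p₀ := by
    obtain ⟨i, hi, ha⟩ := mem_Np.1 hp₀mem
    rwa [mem_singleton.1 hi] at ha
  have hp₀pos : 0 < μ p₀ := lt_of_le_of_ne (hμ p₀) (Ne.symm hp₀ne)
  -- the family of dangerous sets
  set slack : Finset I → ℝ := fun F => ∑ p ∈ Np adj F, μ p - ∑ i ∈ F, t i with hslack
  set Fam : Finset (Finset I) :=
    ((D.erase i₀).powerset).filter (fun F => F.Nonempty ∧ p₀ ∈ Np adj F) with hFam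
  have hmemFam : ∀ F ∈ Fam, F ⊆ D ∧ i₀ ∉ F ∧ F.Nonempty ∧ p₀ ∈ Np adj F := by
    intro F hF
    simp only [hFam, mem_filter, mem_powerset] at hF
    obtain ⟨hsub, hne, hp⟩ := hF
    exact ⟨hsub.trans (erase_subset _ _), fun h => (mem_erase.1 (hsub h)).1 rfl, hne, hp⟩
  have hslackpos : ∀ F ∈ Fam, 0 < slack F := by
    intro F hF
    obtain ⟨hFD, hi₀F, hFne, _⟩ := hmemFam F hF
    have hne : F ≠ D := fun h => hi₀F (h ▸ hi₀D)
    have := hall F hFD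
    have hneq := htight F hFD hFne hne
    simp only [hslack]
    cases' lt_or_eq_of_le this with h h
    · linarith
    · exact absurd h hneq
  set γ : ℝ := min (t i₀) (min (μ p₀)
    (if h : Fam.Nonempty then (Fam.image slack).min' (h.image _) else t i₀)) with hγ
  have hγpos : 0 < γ := by
    refine lt_min hti₀pos (lt_min hp₀pos ?_)
    split_ifs with h
    · obtain ⟨y, hy, hval⟩ := mem_image.1 ((Fam.image slack).min'_mem (h.image _))
      rw [← hval]; exact hslackpos y hy
    · exact hti₀pos
  have hγt : γ ≤ t i₀ := min_le_left _ _
  have hγμ : γ ≤ μ p₀ := (min_le_right _ _).trans (min_le_left _ _)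
  have hγslack : ∀ F ∈ Fam, γ ≤ slack F := by
    intro F hF
    have hne : Fam.Nonempty := ⟨F, hF⟩
    have h1 : γ ≤ (Fam.image slack).min' (hne.image _) := by
      refine (min_le_right _ _).trans ((min_le_right _ _).trans ?_)
      rw [dif_pos hne]
    exact h1.trans (min'_le _ _ (mem_image_of_mem _ hF))
  set μ' : P → ℝ := Function.update μ p₀ (μ p₀ - γ) with hμ'
  set t' : I → ℝ := Function.update t i₀ (t i₀ - γ) with ht'
  have hμ'at : ∀ q, μ' q = if q = p₀ then μ p₀ - γ else μ q := fun q => by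
    rw [hμ', Function.update_apply]
  have ht'at : ∀ i, t' i = if i = i₀ then t i₀ - γ else t i := fun i => by
    rw [ht', Function.update_apply]
  have hμ'nn : ∀ p, 0 ≤ μ' p := by
    intro p; rw [hμ'at]; split_ifs with h
    · linarith
    · exact hμ p
  have ht'nn : ∀ i, 0 ≤ t' i := by
    intro i; rw [ht'at]; split_ifs with h
    · linarith
    · exact ht i
  have hμ'sum : ∀ Q : Finset P, ∑ p ∈ Q, μ' p
      = ∑ p ∈ Q, μ p - (if p₀ ∈ Q then γ else 0) := by
    intro Q
    split_ifs with h
    · rw [← sum_erase_add Q μ' h, ← sum_erase_add Q μ h]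
      have h1 : ∑ p ∈ Q.erase p₀, μ' p = ∑ p ∈ Q.erase p₀, μ p :=
        sum_congr rfl fun p hp => by rw [hμ'at, if_neg (mem_erase.1 hp).1]
      have h2 : μ' p₀ = μ p₀ - γ := by rw [hμ'at, if_pos rfl]
      rw [h1, h2]; ring
    · rw [sub_zero]
      refine sum_congr rfl fun p hp => ?_
      rw [hμ'at, if_neg (fun (he : p = p₀) => h (show p₀ ∈ Q from he ▸ hp))]
  have ht'sum : ∀ F : Finset I, ∑ i ∈ F, t' i
      = ∑ i ∈ F, t i - (if i₀ ∈ F then γ else 0) := by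
    intro F
    split_ifs with h
    · rw [← sum_erase_add F t' h, ← sum_erase_add F t h]
      have h1 : ∑ i ∈ F.erase i₀, t' i = ∑ i ∈ F.erase i₀, t i :=
        sum_congr rfl fun i hi => by rw [ht'at, if_neg (mem_erase.1 hi).1]
      have h2 : t' i₀ = t i₀ - γ := by rw [ht'at, if_pos rfl]
      rw [h1, h2]; ring
    · rw [sub_zero]
      refine sum_congr rfl fun i hi => ?_
      rw [ht'at, if_neg (fun (he : i = i₀) => h (show i₀ ∈ F from he ▸ hi))]
  -- Hall for the updated instance
  have hall' : ∀ F ⊆ D, ∑ i ∈ F, t' i ≤ ∑ p ∈ Np adj F, μ' p := by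
    intro F hFD
    rw [ht'sum, hμ'sum]
    by_cases hi₀F : i₀ ∈ F
    · have hp₀NF : p₀ ∈ Np adj F := mem_Np.2 ⟨i₀, hi₀F, hp₀adj⟩
      rw [if_pos hi₀F, if_pos hp₀NF]
      linarith [hall F hFD]
    · rw [if_neg hi₀F]
      by_cases hp₀NF : p₀ ∈ Np adj F
      · rw [if_pos hp₀NF]
        rcases F.eq_empty_or_nonempty with hF | hF
        · exfalso
          rw [hF] at hp₀NF
          obtain ⟨i, hi, _⟩ := mem_Np.1 hp₀NF
          exact absurd hi (notMem_empty i)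
        · have hFam' : F ∈ Fam := by
            simp only [hFam, mem_filter, mem_powerset]
            exact ⟨fun i hi => mem_erase.2 ⟨fun he => hi₀F (he ▸ hi), hFD hi⟩, hF, hp₀NF⟩
          have := hγslack F hFam'
          simp only [hslack] at this
          linarith
      · rw [if_neg hp₀NF]
        linarith [hall F hFD]
  -- the unit flow
  set u : P → I → ℝ := fun p i => if p = p₀ ∧ i = i₀ then γ else 0 with hu
  have hunn : ∀ p i, 0 ≤ u p i := by
    intro p i; rw [hu]; dsimp only; split_ifs
    · exact le_of_lt hγpos
    · exact le_refl 0
  have husum : ∀ p, ∑ i, u p i = if p = p₀ then γ else 0 := by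
    intro p
    split_ifs with h
    · have h1 : ∑ i, u p i = ∑ i, if i = i₀ then γ else 0 :=
        sum_congr rfl fun i _ => by simp [hu, h]
      rw [h1, sum_ite_eq' univ i₀ (fun _ => γ), if_pos (mem_univ i₀)]
    · exact sum_eq_zero fun i _ => by simp [hu, h]
  have husum' : ∀ i, ∑ p, u p i = if i = i₀ then γ else 0 := by
    intro i
    split_ifs with h
    · have h1 : ∑ p, u p i = ∑ p, if p = p₀ then γ else 0 :=
        sum_congr rfl fun p _ => by simp [hu, h]
      rw [h1, sum_ite_eq' univ p₀ (fun _ => γ), if_pos (mem_univ p₀)]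
    · exact sum_eq_zero fun p _ => by simp [hu, h]
  -- assembling : any solution for (μ', t') gives one for (μ, t)
  have assemble : ∀ s₂ : P → I → ℝ, (∀ p i, 0 ≤ s₂ p i) →
      (∀ p i, s₂ p i ≠ 0 → i ∈ adj p ∧ i ∈ D) →
      (∀ p, ∑ i, s₂ p i ≤ μ' p) → (∀ i ∈ D, ∑ p, s₂ p i = t' i) →
      ∃ s : P → I → ℝ, (∀ p i, 0 ≤ s p i) ∧ (∀ p i, s p i ≠ 0 → i ∈ adj p ∧ i ∈ D) ∧
        (∀ p, ∑ i, s p i ≤ μ p) ∧ (∀ i ∈ D, ∑ p, s p i = t i) := by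
    intro s₂ h2n h2s h2c h2d
    refine ⟨fun p i => s₂ p i + u p i, fun p i => add_nonneg (h2n p i) (hunn p i), ?_, ?_, ?_⟩
    · intro p i h
      rcases eq_or_ne (s₂ p i) 0 with h2 | h2
      · have hune : u p i ≠ 0 := fun hz =>
          h (show s₂ p i + u p i = 0 by rw [h2, hz, add_zero])
        have hpi : p = p₀ ∧ i = i₀ := by
          by_contra hc
          apply hune
          simp only [hu]
          rw [if_neg hc]
        exact ⟨hpi.2 ▸ hpi.1 ▸ hp₀adj, hpi.2 ▸ hi₀D⟩
      · exact h2s p i h2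
    · intro p
      rw [sum_add_distrib, husum]
      have h2 := h2c p
      rw [hμ'at] at h2
      split_ifs at h2 ⊢ with hp
      · rw [hp] at h2 ⊢
        linarith
      · linarith
    · intro i hi
      rw [sum_add_distrib, husum', h2d i hi, ht'at]
      split_ifs with hii
      · rw [hii]; ring
      · ring
  -- decide which bound γ achieves
  have hγcases : γ = t i₀ ∨ γ = μ p₀ ∨ ∃ F₀ ∈ Fam, γ = slack F₀ := by
    rcases min_cases (t i₀) (min (μ p₀) (if h : Fam.Nonempty then (Fam.image slack).min' (h.image _) else t i₀)) with ⟨h1, _⟩ | ⟨h1, _⟩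
    · exact Or.inl h1
    · rcases min_cases (μ p₀) (if h : Fam.Nonempty then (Fam.image slack).min' (h.image _) else t i₀) with ⟨h2, _⟩ | ⟨h2, _⟩
      · right; left; rw [hγ, h1, h2]
      · by_cases hne : Fam.Nonempty
        · right; right
          have h3 : γ = (Fam.image slack).min' (hne.image _) := by
            rw [hγ, h1, h2, dif_pos hne]
          obtain ⟨F₀, hF₀, hval⟩ := mem_image.1 ((Fam.image slack).min'_mem (hne.image _))
          exact ⟨F₀, hF₀, by rw [h3, ← hval]⟩
        · left
          rw [hγ, h1, h2, dif_neg hne]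
  rcases hγcases with hcase | hcase | hcase
  · -- γ = t i₀ : recurse on D.erase i₀
    have hcard : (D.erase i₀).card + 1 ≤ D.card := by
      rw [card_erase_of_mem hi₀D]; omega
    obtain ⟨s₂, h2n, h2s, h2c, h2d⟩ := IH (n-1) (by omega) (D.erase i₀) μ' t'
      (by have := meas_step hcard (hposC μ') hDn; omega)
      hμ'nn ht'nn (fun F hF => hall' F (hF.trans (erase_subset _ _)))
    refine assemble s₂ h2n (fun p i h => ?_) h2c (fun i hi => ?_)
    · obtain ⟨ha, hd⟩ := h2s p i h
      exact ⟨ha, (erase_subset _ _) hd⟩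
    · by_cases hii : i = i₀
      · have hzero : ∑ p, s₂ p i = 0 := sum_eq_zero fun p _ => by
          by_contra h
          have := (h2s p i h).2
          rw [hii] at this
          exact (mem_erase.1 this).1 rfl
        rw [hzero, hii, ht'at, if_pos rfl, hcase]
        ring
      · exact (h2d i (mem_erase.2 ⟨hii, hi⟩))
  · -- γ = μ p₀ : recurse with μ', t' on D (one fewer positive supply)
    have hposdrop : (univ.filter (fun p => μ' p ≠ 0)).card + 1
        ≤ (univ.filter (fun p => μ p ≠ 0)).card := by
      have hsub : univ.filter (fun p => μ' p ≠ 0)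
          ⊆ (univ.filter (fun p => μ p ≠ 0)).erase p₀ := by
        intro p hp
        simp only [mem_filter, mem_univ, true_and] at hp
        rw [mem_erase, mem_filter]
        constructor
        · intro he
          rw [he, hμ'at, if_pos rfl, hcase] at hp
          exact hp (by ring)
        · refine ⟨mem_univ p, ?_⟩
          intro h0
          rw [hμ'at] at hp
          split_ifs at hp with he
          · rw [he] at h0; linarith [hp₀pos]
          · exact hp h0
      have h1 := card_le_card hsub
      have h2 : p₀ ∈ univ.filter (fun p => μ p ≠ 0) := by
        simp only [mem_filter, mem_univ, true_and]; exact hp₀ne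
      rw [card_erase_of_mem h2] at h1
      have h3 := card_pos.2 ⟨p₀, h2⟩
      omega
    obtain ⟨s₂, h2n, h2s, h2c, h2d⟩ := IH (n-1) (by omega) D μ' t'
      (by omega) hμ'nn ht'nn hall'
    exact assemble s₂ h2n h2s h2c h2d
  · -- γ = slack F₀ : split with the now-tight F₀
    obtain ⟨F₀, hF₀Fam, hγeq⟩ := hcase
    obtain ⟨hF₀D, hi₀F₀, hF₀ne, hp₀NF₀⟩ := hmemFam F₀ hF₀Fam
    have hF₀neD : F₀ ≠ D := fun h => hi₀F₀ (h ▸ hi₀D)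
    have htight' : ∑ i ∈ F₀, t' i = ∑ p ∈ Np adj F₀, μ' p := by
      rw [ht'sum, hμ'sum, if_neg hi₀F₀, if_pos hp₀NF₀, sub_zero]
      rw [hslack] at hγeq
      dsimp only at hγeq
      linarith
    obtain ⟨s₂, h2n, h2s, h2c, h2d⟩ := split μ' t' F₀ hμ'nn ht'nn hall' hF₀D hF₀ne hF₀neD htight'
    exact assemble s₂ h2n h2s h2c h2d

theorem flow_exists (adj : P → Finset I) (μ : P → ℝ) (t : I → ℝ)
    (hμ : ∀ p, 0 ≤ μ p) (ht : ∀ i, 0 ≤ t i)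
    (hall : ∀ F : Finset I, ∑ i ∈ F, t i ≤ ∑ p ∈ Np adj F, μ p) :
    ∃ s : P → I → ℝ, (∀ p i, 0 ≤ s p i) ∧ (∀ p i, s p i ≠ 0 → i ∈ adj p) ∧
      (∀ p, ∑ i, s p i ≤ μ p) ∧ (∀ i, ∑ p, s p i = t i) := by
  obtain ⟨s, h1, h2, h3, h4⟩ := flow_aux adj
    ((univ : Finset I).card * (Fintype.card P + 1) + (univ.filter (fun p => μ p ≠ 0)).card)
    univ μ t (le_refl _) hμ ht (fun F _ => hall F)
  exact ⟨s, h1, fun p i h => (h2 p i h).1, h3, fun i => h4 i (mem_univ i)⟩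

end Flow
section CRS
variable {α β : Type} [Fintype α] [Fintype β] [DecidableEq α] [DecidableEq β]

def colF (S : Finset (α × β)) (a : α) : Finset β := univ.filter (fun v => (a, v) ∈ S)

def PvF (g : α → Option β) (v : β) : Finset α := univ.filter (fun a => g a = some v)

def edgesF (h : β → Option α) : Finset (α × β) := univ.filter (fun q => h q.2 = some q.1)

noncomputable def crs (π : α → Finset β → Option β → ℝ) (ρ : β → Finset α → Option α → ℝ)
    (S T : Finset (α × β)) : ℝ :=
  ∑ g : α → Option β, (∏ a, π a (colF S a) (g a)) *
    ∑ h : β → Option α, (if edgesF h = T then ∏ v, ρ v (PvF g v) (h v) else 0)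

lemma sum_fn_prod {ι κ : Type} [Fintype ι] [DecidableEq ι] [Fintype κ] (F : ι → κ → ℝ) :
    ∑ g : ι → κ, ∏ i, F i (g i) = ∏ i, ∑ k, F i k := by
  rw [Finset.prod_univ_sum (fun _ => univ) F]
  rw [Fintype.piFinset_univ]

def colEquiv : Finset (α × β) ≃ (α → Finset β) where
  toFun := colF
  invFun := fun f => univ.filter (fun q => q.2 ∈ f q.1)
  left_inv := by
    intro S
    ext q
    simp [colF]
  right_inv := by
    intro f
    ext v
    simp [colF]

lemma sum_colF {M : Type} [AddCommMonoid M] (G : (α → Finset β) → M) :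
    ∑ S : Finset (α × β), G (colF S) = ∑ f : α → Finset β, G f :=
  Equiv.sum_comp colEquiv G

lemma prod_split (f : α × β → ℝ) (S : Finset (α × β)) :
    ∏ q ∈ S, f q = ∏ a, ∏ v ∈ colF S a, f (a, v) := by
  have h0 : S = univ.filter (· ∈ S) := by ext q; simp
  conv_lhs => rw [h0]
  rw [prod_filter, Fintype.prod_prod_type]
  refine prod_congr rfl fun a _ => ?_
  rw [colF, prod_filter]

lemma colF_compl (S : Finset (α × β)) (a : α) : colF Sᶜ a = (colF S a)ᶜ := by
  ext v; simp [colF]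

lemma bw_colF (x : α × β → ℝ) (S : Finset (α × β)) :
    bw x S = ∏ a, bw (fun v => x (a, v)) (colF S a) := by
  unfold bw
  rw [prod_mul_distrib]
  congr 1
  · exact prod_split x S
  · rw [prod_split (fun q => 1 - x q) Sᶜ]
    exact prod_congr rfl fun a _ => by rw [colF_compl]


variable {π : α → Finset β → Option β → ℝ} {ρ : β → Finset α → Option α → ℝ}

lemma crs_nonneg (hπ : ∀ a B o, 0 ≤ π a B o) (hρ : ∀ v K o, 0 ≤ ρ v K o)
    (S T : Finset (α × β)) : 0 ≤ crs π ρ S T := by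
  refine sum_nonneg fun g _ => mul_nonneg (prod_nonneg fun a _ => hπ _ _ _) ?_
  refine sum_nonneg fun h _ => ?_
  split_ifs
  · exact prod_nonneg fun v _ => hρ _ _ _
  · exact le_refl 0

lemma crs_sum (hπsum : ∀ a B, ∑ o : Option β, π a B o = 1)
    (hρsum : ∀ v K, ∑ o : Option α, ρ v K o = 1) (S : Finset (α × β)) :
    ∑ T : Finset (α × β), crs π ρ S T = 1 := by
  unfold crs
  rw [sum_comm]
  have h1 : ∀ g : α → Option β,
      ∑ T : Finset (α × β), (∏ a, π a (colF S a) (g a)) *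
        ∑ h : β → Option α, (if edgesF h = T then ∏ v, ρ v (PvF g v) (h v) else 0)
      = ∏ a, π a (colF S a) (g a) := by
    intro g
    rw [← mul_sum]
    have h2 : ∑ T : Finset (α × β), ∑ h : β → Option α,
        (if edgesF h = T then ∏ v, ρ v (PvF g v) (h v) else 0) = 1 := by
      rw [sum_comm]
      have h3 : ∀ h : β → Option α, ∑ T : Finset (α × β),
          (if edgesF h = T then ∏ v, ρ v (PvF g v) (h v) else 0)
          = ∏ v, ρ v (PvF g v) (h v) := by
        intro h
        rw [sum_ite_eq univ (edgesF h) (fun _ => ∏ v, ρ v (PvF g v) (h v)),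
          if_pos (mem_univ _)]
      rw [sum_congr rfl fun h _ => h3 h, sum_fn_prod (fun v o => ρ v (PvF g v) o)]
      exact prod_eq_one fun v _ => hρsum v (PvF g v)
    rw [h2, mul_one]
  rw [sum_congr rfl fun g _ => h1 g, sum_fn_prod (fun a o => π a (colF S a) o)]
  exact prod_eq_one fun a _ => hπsum a (colF S a)

lemma crs_supp (hπsupp : ∀ a B v, π a B (some v) ≠ 0 → v ∈ B)
    (hρsupp : ∀ v K a, ρ v K (some a) ≠ 0 → a ∈ K)
    (S T : Finset (α × β)) (hne : crs π ρ S T ≠ 0) :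
    T ⊆ S ∧ ∀ e ∈ T, ∀ f ∈ T, e ≠ f → e.1 ≠ f.1 ∧ e.2 ≠ f.2 := by
  obtain ⟨g, _, hg⟩ := exists_ne_zero_of_sum_ne_zero hne
  have hgπ : ∀ a, π a (colF S a) (g a) ≠ 0 := by
    intro a
    have := left_ne_zero_of_mul hg
    exact prod_ne_zero_iff.1 this a (mem_univ a)
  obtain ⟨h, _, hh⟩ := exists_ne_zero_of_sum_ne_zero (right_ne_zero_of_mul hg)
  have hT : edgesF h = T := by
    by_contra hc; rw [if_neg hc] at hh; exact hh rfl
  rw [if_pos hT] at hh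
  have hhρ : ∀ v, ρ v (PvF g v) (h v) ≠ 0 := fun v => prod_ne_zero_iff.1 hh v (mem_univ v)
  -- every edge of T is "accepted": h e.2 = some e.1 and proposed: g e.1 = some e.2
  have hkey : ∀ e ∈ T, h e.2 = some e.1 ∧ g e.1 = some e.2 ∧ e ∈ S := by
    intro e he
    rw [← hT] at he
    have h1 : h e.2 = some e.1 := by
      have := mem_filter.1 he
      simpa using this.2
    have h2 : g e.1 = some e.2 := by
      have := hhρ e.2
      rw [h1] at this
      have ha := hρsupp _ _ _ this
      have := mem_filter.1 ha
      exact this.2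
    have h3 : e ∈ S := by
      have := hgπ e.1
      rw [h2] at this
      have hv := hπsupp _ _ _ this
      have := (mem_filter.1 hv).2
      simpa using this
    exact ⟨h1, h2, h3⟩
  constructor
  · exact fun e he => (hkey e he).2.2
  · intro e he f hf hef
    obtain ⟨he1, he2, _⟩ := hkey e he
    obtain ⟨hf1, hf2, _⟩ := hkey f hf
    constructor
    · intro hc
      apply hef
      have : some e.2 = some f.2 := by rw [← he2, ← hf2, hc]
      exact Prod.ext hc (Option.some_injective _ this)
    · intro hc
      apply hef
      have : some e.1 = some f.1 := by rw [← he1, ← hf1, hc]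
      exact Prod.ext (Option.some_injective _ this) hc

lemma crs_marg (hπsum : ∀ a B, ∑ o : Option β, π a B o = 1)
    (hρsum : ∀ v K, ∑ o : Option α, ρ v K o = 1)
    (x : α × β → ℝ) (e : α × β) :
    ∑ S : Finset (α × β), bw x S * (∑ T ∈ univ.filter (fun T : Finset (α × β) => e ∈ T), crs π ρ S T)
      = ∑ K : Finset α,
          bw (fun a => ∑ B : Finset β, bw (fun v => x (a, v)) B * π a B (some e.2)) K
            * ρ e.2 K (some e.1) := by
  set mπ : α → ℝ := fun a => ∑ B : Finset β, bw (fun v => x (a, v)) B * π a B (some e.2) with hmπ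
  -- step 1 : the inner T-sum
  have step1 : ∀ S : Finset (α × β),
      ∑ T ∈ univ.filter (fun T : Finset (α × β) => e ∈ T), crs π ρ S T
      = ∑ g : α → Option β, (∏ a, π a (colF S a) (g a)) * ρ e.2 (PvF g e.2) (some e.1) := by
    intro S
    unfold crs
    rw [sum_comm]
    refine sum_congr rfl fun g _ => ?_
    rw [← mul_sum]
    congr 1
    rw [sum_comm]
    have h4 : ∀ h : β → Option α,
        ∑ T ∈ univ.filter (fun T : Finset (α × β) => e ∈ T),
          (if edgesF h = T then ∏ v, ρ v (PvF g v) (h v) else 0)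
        = if h e.2 = some e.1 then ∏ v, ρ v (PvF g v) (h v) else 0 := by
      intro h
      rw [sum_ite_eq (univ.filter (fun T : Finset (α × β) => e ∈ T)) (edgesF h)
        (fun _ => ∏ v, ρ v (PvF g v) (h v))]
      have hiff : (edgesF h ∈ univ.filter (fun T : Finset (α × β) => e ∈ T))
          ↔ (h e.2 = some e.1) := by
        simp [edgesF]
      exact if_congr hiff rfl rfl
    rw [sum_congr rfl fun h _ => h4 h]
    -- now factor over v
    set F : β → Option α → ℝ := fun v o =>
      if v = e.2 then (if o = some e.1 then ρ v (PvF g v) o else 0)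
      else ρ v (PvF g v) o with hF
    have h5 : ∀ h : β → Option α,
        (if h e.2 = some e.1 then ∏ v, ρ v (PvF g v) (h v) else 0) = ∏ v, F v (h v) := by
      intro h
      split_ifs with hc
      · refine prod_congr rfl fun v _ => ?_
        rw [hF]
        dsimp only
        by_cases hv : v = e.2
        · subst hv
          rw [if_pos rfl, if_pos hc]
        · rw [if_neg hv]
      · refine (prod_eq_zero (mem_univ e.2) ?_).symm
        rw [hF]
        dsimp only
        rw [if_pos rfl, if_neg hc]
    rw [sum_congr rfl fun h _ => h5 h, sum_fn_prod F]
    have hside : ∀ v ∈ (univ : Finset β), v ≠ e.2 → ∑ o : Option α, F v o = 1 := by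
      intro v _ hv
      have : ∀ o : Option α, F v o = ρ v (PvF g v) o := fun o => by
        rw [hF]; dsimp only; rw [if_neg hv]
      rw [sum_congr rfl fun o _ => this o]
      exact hρsum v (PvF g v)
    rw [prod_eq_single e.2 hside (fun hc => absurd (mem_univ e.2) hc)]
    have : ∀ o : Option α, F e.2 o = (if o = some e.1 then ρ e.2 (PvF g e.2) (some e.1) else 0) := by
      intro o
      rw [hF]; dsimp only
      rw [if_pos rfl]
      split_ifs with ho
      · rw [ho]
      · rfl
    rw [sum_congr rfl fun o _ => this o, sum_ite_eq' univ (some e.1)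
      (fun _ => ρ e.2 (PvF g e.2) (some e.1)), if_pos (mem_univ _)]
  -- step 2 : expand over the proposal set K at vertex e.2
  set A : Finset α → Finset (α × β) → (α → Option β) → ℝ := fun K S g =>
    bw x S * (∏ a, π a (colF S a) (g a)) * (if PvF g e.2 = K then 1 else 0) with hA
  have step2 : ∀ (S : Finset (α × β)) (g : α → Option β),
      bw x S * ((∏ a, π a (colF S a) (g a)) * ρ e.2 (PvF g e.2) (some e.1))
      = ∑ K : Finset α, A K S g * ρ e.2 K (some e.1) := by
    intro S g
    have h1 : ∀ K : Finset α, A K S g * ρ e.2 K (some e.1)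
        = if PvF g e.2 = K then bw x S * ((∏ a, π a (colF S a) (g a)) * ρ e.2 K (some e.1)) else 0 := by
      intro K
      rw [hA]; dsimp only
      split_ifs with h
      · ring
      · ring
    rw [sum_congr rfl fun K _ => h1 K,
      sum_ite_eq univ (PvF g e.2)
        (fun K => bw x S * ((∏ a, π a (colF S a) (g a)) * ρ e.2 K (some e.1))),
      if_pos (mem_univ _)]
  -- step 3 : compute the joint distribution of the proposal set
  have step3 : ∀ K : Finset α, ∑ S : Finset (α × β), ∑ g : α → Option β, A K S g = bw mπ K := by
    intro K
    set χ : α → Option β → ℝ := fun a o =>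
      if a ∈ K then (if o = some e.2 then 1 else 0) else (if o = some e.2 then 0 else 1) with hχ
    have hind : ∀ g : α → Option β, (if PvF g e.2 = K then (1:ℝ) else 0) = ∏ a, χ a (g a) := by
      intro g
      by_cases h : PvF g e.2 = K
      · rw [if_pos h]
        refine (prod_eq_one fun a _ => ?_).symm
        rw [hχ]; dsimp only
        by_cases haK : a ∈ K
        · rw [if_pos haK, if_pos]
          have : a ∈ PvF g e.2 := h.symm ▸ haK
          exact (mem_filter.1 this).2
        · rw [if_neg haK, if_neg]
          · intro hc
            exact haK (h ▸ (mem_filter.2 ⟨mem_univ a, hc⟩))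
      · rw [if_neg h]
        have : ∃ a, ¬ (g a = some e.2 ↔ a ∈ K) := by
          by_contra hc
          push_neg at hc
          apply h
          ext a
          simp only [PvF, mem_filter, mem_univ, true_and]
          exact hc a
        obtain ⟨a, ha⟩ := this
        refine (prod_eq_zero (mem_univ a) ?_).symm
        rw [hχ]; dsimp only
        by_cases haK : a ∈ K
        · rw [if_pos haK, if_neg]
          intro hc
          exact ha (iff_of_true hc haK)
        · rw [if_neg haK, if_pos]
          by_contra hc
          exact ha (iff_of_false hc haK)
    have hterm : ∀ (S : Finset (α × β)) (g : α → Option β), A K S g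
        = ∏ a, (bw (fun v => x (a, v)) (colF S a) * π a (colF S a) (g a) * χ a (g a)) := by
      intro S g
      rw [hA]; dsimp only
      rw [hind g, bw_colF x S, ← prod_mul_distrib, ← prod_mul_distrib]
    have hswap : ∀ S : Finset (α × β), ∑ g : α → Option β, A K S g
        = ∏ a, ∑ o : Option β, (bw (fun v => x (a, v)) (colF S a) * π a (colF S a) o * χ a o) := by
      intro S
      rw [sum_congr rfl fun g _ => hterm S g]
      exact sum_fn_prod (fun a o => bw (fun v => x (a, v)) (colF S a) * π a (colF S a) o * χ a o)
    rw [sum_congr rfl fun S _ => hswap S]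
    have hcol : ∑ S : Finset (α × β),
        ∏ a, ∑ o : Option β, (bw (fun v => x (a, v)) (colF S a) * π a (colF S a) o * χ a o)
        = ∑ f : α → Finset β,
        ∏ a, ∑ o : Option β, (bw (fun v => x (a, v)) (f a) * π a (f a) o * χ a o) :=
      sum_colF (fun f => ∏ a, ∑ o : Option β, (bw (fun v => x (a, v)) (f a) * π a (f a) o * χ a o))
    rw [hcol, sum_fn_prod (fun a B => ∑ o : Option β, (bw (fun v => x (a, v)) B * π a B o * χ a o))]
    -- per-vertex computation
    have hper : ∀ a, ∑ B : Finset β, ∑ o : Option β, (bw (fun v => x (a, v)) B * π a B o * χ a o)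
        = if a ∈ K then mπ a else 1 - mπ a := by
      intro a
      by_cases haK : a ∈ K
      · rw [if_pos haK]
        have h1 : ∀ B : Finset β, ∑ o : Option β, (bw (fun v => x (a, v)) B * π a B o * χ a o)
            = bw (fun v => x (a, v)) B * π a B (some e.2) := by
          intro B
          have h2 : ∀ o : Option β, bw (fun v => x (a, v)) B * π a B o * χ a o
              = if o = some e.2 then bw (fun v => x (a, v)) B * π a B (some e.2) else 0 := by
            intro o
            rw [hχ]; dsimp only
            rw [if_pos haK]
            split_ifs with ho
            · rw [ho]; ring
            · ring
          rw [sum_congr rfl fun o _ => h2 o, sum_ite_eq' univ (some e.2)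
            (fun _ => bw (fun v => x (a, v)) B * π a B (some e.2)), if_pos (mem_univ _)]
        rw [sum_congr rfl fun B _ => h1 B, hmπ]
      · rw [if_neg haK]
        have h1 : ∀ B : Finset β, ∑ o : Option β, (bw (fun v => x (a, v)) B * π a B o * χ a o)
            = bw (fun v => x (a, v)) B - bw (fun v => x (a, v)) B * π a B (some e.2) := by
          intro B
          have h2 : ∀ o : Option β, bw (fun v => x (a, v)) B * π a B o * χ a o
              = bw (fun v => x (a, v)) B * π a B o
                - (if o = some e.2 then bw (fun v => x (a, v)) B * π a B (some e.2) else 0) := by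
            intro o
            rw [hχ]; dsimp only
            rw [if_neg haK]
            split_ifs with ho
            · rw [ho]; ring
            · ring
          rw [sum_congr rfl fun o _ => h2 o, sum_sub_distrib, ← mul_sum, hπsum a B, mul_one,
            sum_ite_eq' univ (some e.2)
            (fun _ => bw (fun v => x (a, v)) B * π a B (some e.2)), if_pos (mem_univ _)]
        rw [sum_congr rfl fun B _ => h1 B, sum_sub_distrib, sum_bw, hmπ]
    rw [prod_congr rfl fun a _ => hper a]
    -- assemble into bw mπ K
    rw [bw, ← prod_mul_prod_compl K (fun a => if a ∈ K then mπ a else 1 - mπ a)]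
    congr 1
    · exact prod_congr rfl fun a ha => if_pos ha
    · exact prod_congr rfl fun a ha => if_neg (mem_compl.1 ha)
  -- put everything together
  calc ∑ S : Finset (α × β), bw x S *
        (∑ T ∈ univ.filter (fun T : Finset (α × β) => e ∈ T), crs π ρ S T)
      = ∑ S : Finset (α × β), ∑ g : α → Option β,
          ∑ K : Finset α, A K S g * ρ e.2 K (some e.1) := by
        refine sum_congr rfl fun S _ => ?_
        rw [step1 S, mul_sum]
        exact sum_congr rfl fun g _ => step2 S g
    _ = ∑ K : Finset α, ∑ S : Finset (α × β), ∑ g : α → Option β, A K S g * ρ e.2 K (some e.1) := by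
        rw [sum_congr rfl fun (S : Finset (α × β)) _ =>
          sum_comm (s := univ) (t := univ) (f := fun g K => A K S g * ρ e.2 K (some e.1)), sum_comm]
    _ = ∑ K : Finset α, (∑ S : Finset (α × β), ∑ g : α → Option β, A K S g) * ρ e.2 K (some e.1) := by
        refine sum_congr rfl fun K _ => ?_
        rw [sum_mul]
        exact sum_congr rfl fun S _ => by rw [sum_mul]
    _ = ∑ K : Finset α, bw mπ K * ρ e.2 K (some e.1) := by
        exact sum_congr rfl fun K _ => by rw [step3 K]

end CRS

/-- A `1 − e^{−(1−1/e)}`-balanced (≈ 0.468) contention resolution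
scheme for bipartite matchings. The bipartite graph has left vertices `α`, right vertices `β`, and
edge set `E ⊆ α × β`. A fractional matching `x` takes values in `[0,1]`, is
supported on `E`, and has degree sums at most `1` at every vertex. `R(x)`
includes each edge `e` independently with probability `x e`, so the probability
of a realization `S` is `(∏_{e∈S} x e)·(∏_{e∉S} (1 − x e))`. A (randomized)
contention resolution scheme is given by `σ S T` = probability of outputting
`T` on input `S`; each output must be a subset of the input and a matching
(no two chosen edges share a left or a right vertex). The scheme guarantees
`Pr[e ∈ σ(R(x))] ≥ (1 − e^{−(1−1/e)}) · x e` for every edge `e ∈ E`, i.e.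
`Pr[e ∈ σ(R(x)) ∣ e ∈ R(x)] ≥ 1 − e^{−(1−1/e)}` whenever `x e > 0`. -/
theorem stmt_5 (α β : Type) [Fintype α] [Fintype β] [DecidableEq α] [DecidableEq β]
    (E : Finset (α × β)) (x : α × β → ℝ)
    (hx0 : ∀ e, 0 ≤ x e) (hx1 : ∀ e, x e ≤ 1)
    (hsupp : ∀ e, e ∉ E → x e = 0)
    (hleft : ∀ u : α, ∑ v : β, x (u, v) ≤ 1)
    (hright : ∀ v : β, ∑ u : α, x (u, v) ≤ 1) :
    ∃ σ : Finset (α × β) → Finset (α × β) → ℝ,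
      (∀ S T, 0 ≤ σ S T) ∧
      (∀ S, ∑ T : Finset (α × β), σ S T = 1) ∧
      (∀ S T, σ S T ≠ 0 →
        T ⊆ S ∧ ∀ e ∈ T, ∀ f ∈ T, e ≠ f → e.1 ≠ f.1 ∧ e.2 ≠ f.2) ∧
      (∀ e ∈ E, 0 < x e →
        ∑ S : Finset (α × β),
          ((∏ f ∈ S, x f) * ∏ f ∈ Sᶜ, (1 - x f)) *
            (∑ T ∈ Finset.univ.filter (fun T : Finset (α × β) => e ∈ T), σ S T)
          ≥ (1 - Real.exp (-(1 - 1 / Real.exp 1))) * x e) := by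
  classical
  set c₀ : ℝ := 1 - Real.exp (-1) with hc₀
  have hexpneg : Real.exp (-1) < 1 := by
    have h := Real.exp_lt_exp.2 (show (-1:ℝ) < 0 by norm_num)
    rwa [Real.exp_zero] at h
  have hc₀pos : 0 < c₀ := by rw [hc₀]; linarith
  have hc₀lt1 : c₀ < 1 := by
    have := Real.exp_pos (-1 : ℝ)
    rw [hc₀]; linarith
  -- left-stage flows
  have hL : ∀ a : α, ∃ sL : Finset β → β → ℝ, (∀ B v, 0 ≤ sL B v) ∧
      (∀ B v, sL B v ≠ 0 → v ∈ B) ∧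
      (∀ B, ∑ v, sL B v ≤ bw (fun v => x (a, v)) B) ∧
      (∀ v, ∑ B : Finset β, sL B v = c₀ * x (a, v)) := by
    intro a
    refine flow_exists (fun B : Finset β => B) (bw (fun v => x (a, v)))
      (fun v => c₀ * x (a, v))
      (bw_nonneg _ (fun v => hx0 _) (fun v => hx1 _))
      (fun v => mul_nonneg (le_of_lt hc₀pos) (hx0 _)) ?_
    intro F
    have h1 : ∑ B ∈ Np (fun B : Finset β => B) F, bw (fun v => x (a, v)) B
        = 1 - ∏ v ∈ F, (1 - x (a, v)) := by
      rw [Np]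
      exact sum_bw_inter _ F
    rw [h1]
    have h2 := hall_bound (fun v => x (a, v)) 1 one_pos (fun v => hx0 _) (fun v => hx1 _)
      (hleft a) F
    rw [div_one] at h2
    calc ∑ v ∈ F, c₀ * x (a, v) = c₀ * ∑ v ∈ F, x (a, v) := by rw [mul_sum]
      _ ≤ 1 - ∏ v ∈ F, (1 - x (a, v)) := by rw [hc₀]; exact h2
  choose sL hsL1 hsL2 hsL3 hsL4 using hL
  -- right-stage flows
  have hc₀x0 : ∀ (q : α × β), 0 ≤ c₀ * x q := fun q => mul_nonneg (le_of_lt hc₀pos) (hx0 q)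
  have hc₀x1 : ∀ (q : α × β), c₀ * x q ≤ 1 := fun q =>
    mul_le_one₀ (le_of_lt hc₀lt1) (hx0 q) (hx1 q)
  have hR : ∀ v : β, ∃ sR : Finset α → α → ℝ, (∀ K a, 0 ≤ sR K a) ∧
      (∀ K a, sR K a ≠ 0 → a ∈ K) ∧
      (∀ K, ∑ a, sR K a ≤ bw (fun a => c₀ * x (a, v)) K) ∧
      (∀ a, ∑ K : Finset α, sR K a = (1 - Real.exp (-c₀)) * x (a, v)) := by
    intro v
    refine flow_exists (fun K : Finset α => K) (bw (fun a => c₀ * x (a, v)))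
      (fun a => (1 - Real.exp (-c₀)) * x (a, v))
      (bw_nonneg _ (fun a => hc₀x0 _) (fun a => hc₀x1 _))
      (fun a => mul_nonneg (by
        have := Real.exp_pos (-c₀)
        have h2 : Real.exp (-c₀) < 1 := by
          have h := Real.exp_lt_exp.2 (show -c₀ < 0 by linarith)
          rwa [Real.exp_zero] at h
        linarith) (hx0 _)) ?_
    intro F
    have h1 : ∑ K ∈ Np (fun K : Finset α => K) F, bw (fun a => c₀ * x (a, v)) K
        = 1 - ∏ a ∈ F, (1 - c₀ * x (a, v)) := by
      rw [Np]
      exact sum_bw_inter _ F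
    rw [h1]
    have hsum : ∑ a : α, c₀ * x (a, v) ≤ c₀ := by
      rw [← mul_sum]
      calc c₀ * ∑ a, x (a, v) ≤ c₀ * 1 := by
            exact mul_le_mul_of_nonneg_left (hright v) (le_of_lt hc₀pos)
        _ = c₀ := mul_one c₀
    have h2 := hall_bound (fun a => c₀ * x (a, v)) c₀ hc₀pos (fun a => hc₀x0 _)
      (fun a => hc₀x1 _) hsum F
    refine le_trans (le_of_eq ?_) h2
    rw [mul_sum]
    refine sum_congr rfl fun a _ => ?_
    field_simp
  choose sR hsR1 hsR2 hsR3 hsR4 using hR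
  -- conditional kernels
  set πS : α → Finset β → β → ℝ := fun a B v =>
    if bw (fun v => x (a, v)) B = 0 then 0 else sL a B v / bw (fun v => x (a, v)) B with hπS
  set π : α → Finset β → Option β → ℝ := fun a B o =>
    o.elim (1 - ∑ v, πS a B v) (fun v => πS a B v) with hπ
  set ρS : β → Finset α → α → ℝ := fun v K a =>
    if bw (fun a => c₀ * x (a, v)) K = 0 then 0 else sR v K a / bw (fun a => c₀ * x (a, v)) K
    with hρS
  set ρ : β → Finset α → Option α → ℝ := fun v K o =>
    o.elim (1 - ∑ a, ρS v K a) (fun a => ρS v K a) with hρ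
  have hπS0 : ∀ a B v, 0 ≤ πS a B v := by
    intro a B v
    rw [hπS]; dsimp only
    split_ifs with h
    · exact le_refl 0
    · exact div_nonneg (hsL1 a B v)
        (bw_nonneg _ (fun v => hx0 _) (fun v => hx1 _) B)
  have hπSsum : ∀ a B, ∑ v, πS a B v ≤ 1 := by
    intro a B
    rw [hπS]; dsimp only
    split_ifs with h
    · simp
    · rw [← sum_div]
      refine div_le_one_of_le₀ (hsL3 a B) (bw_nonneg _ (fun v => hx0 _) (fun v => hx1 _) B)
  have hρS0 : ∀ v K a, 0 ≤ ρS v K a := by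
    intro v K a
    rw [hρS]; dsimp only
    split_ifs with h
    · exact le_refl 0
    · exact div_nonneg (hsR1 v K a)
        (bw_nonneg _ (fun a => hc₀x0 _) (fun a => hc₀x1 _) K)
  have hρSsum : ∀ v K, ∑ a, ρS v K a ≤ 1 := by
    intro v K
    rw [hρS]; dsimp only
    split_ifs with h
    · simp
    · rw [← sum_div]
      refine div_le_one_of_le₀ (hsR3 v K) (bw_nonneg _ (fun a => hc₀x0 _) (fun a => hc₀x1 _) K)
  have hπ0 : ∀ a B o, 0 ≤ π a B o := by
    intro a B o
    rw [hπ]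
    match o with
    | none => dsimp only [Option.elim]; linarith [hπSsum a B]
    | some v => exact hπS0 a B v
  have hρ0 : ∀ v K o, 0 ≤ ρ v K o := by
    intro v K o
    rw [hρ]
    match o with
    | none => dsimp only [Option.elim]; linarith [hρSsum v K]
    | some a => exact hρS0 v K a
  have hπsum : ∀ a B, ∑ o : Option β, π a B o = 1 := by
    intro a B
    rw [Fintype.sum_option]
    rw [hπ]; dsimp only [Option.elim]
    ring
  have hρsum : ∀ v K, ∑ o : Option α, ρ v K o = 1 := by
    intro v K
    rw [Fintype.sum_option]
    rw [hρ]; dsimp only [Option.elim]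
    ring
  have hπsupp : ∀ a B v, π a B (some v) ≠ 0 → v ∈ B := by
    intro a B v h
    rw [hπ] at h; dsimp only [Option.elim] at h
    rw [hπS] at h; dsimp only at h
    apply hsL2 a B v
    intro hz
    apply h
    split_ifs
    · rfl
    · rw [hz, zero_div]
  have hρsupp : ∀ v K a, ρ v K (some a) ≠ 0 → a ∈ K := by
    intro v K a h
    rw [hρ] at h; dsimp only [Option.elim] at h
    rw [hρS] at h; dsimp only at h
    apply hsR2 v K a
    intro hz
    apply h
    split_ifs
    · rfl
    · rw [hz, zero_div]
  -- the scheme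
  refine ⟨crs π ρ, crs_nonneg hπ0 hρ0, crs_sum hπsum hρsum, crs_supp hπsupp hρsupp, ?_⟩
  intro e heE hxe
  have hmarg := crs_marg (π := π) (ρ := ρ) hπsum hρsum x e
  have hgoal : ∑ S : Finset (α × β),
      ((∏ f ∈ S, x f) * ∏ f ∈ Sᶜ, (1 - x f)) *
        (∑ T ∈ Finset.univ.filter (fun T : Finset (α × β) => e ∈ T), crs π ρ S T)
      = ∑ S : Finset (α × β), bw x S *
        (∑ T ∈ Finset.univ.filter (fun T : Finset (α × β) => e ∈ T), crs π ρ S T) := rfl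
  rw [ge_iff_le, hgoal, hmarg]
  -- compute the proposal marginals
  have hmπ : (fun a => ∑ B : Finset β, bw (fun v => x (a, v)) B * π a B (some e.2))
      = fun a => c₀ * x (a, e.2) := by
    funext a
    rw [hπ]; dsimp only [Option.elim]
    rw [hπS]; dsimp only
    rw [kernel_sum (bw (fun v => x (a, v))) (sL a) (hsL1 a) (hsL3 a) e.2]
    exact hsL4 a e.2
  rw [hmπ]
  have hfinal : ∑ K : Finset α, bw (fun a => c₀ * x (a, e.2)) K * ρ e.2 K (some e.1)
      = (1 - Real.exp (-c₀)) * x (e.1, e.2) := by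
    have h1 : ∀ K : Finset α, bw (fun a => c₀ * x (a, e.2)) K * ρ e.2 K (some e.1)
        = bw (fun a => c₀ * x (a, e.2)) K *
          (if bw (fun a => c₀ * x (a, e.2)) K = 0 then 0
           else sR e.2 K e.1 / bw (fun a => c₀ * x (a, e.2)) K) := by
      intro K
      rw [hρ]
      dsimp only [Option.elim]
    rw [sum_congr rfl fun K _ => h1 K,
      kernel_sum (bw (fun a => c₀ * x (a, e.2))) (sR e.2) (hsR1 e.2) (hsR3 e.2) e.1]
    exact hsR4 e.2 e.1
  rw [hfinal]
  have h1e : Real.exp (-1) = 1 / Real.exp 1 := by rw [Real.exp_neg, one_div]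
  have hee : x (e.1, e.2) = x e := by rw [Prod.mk.eta]
  rw [hee, hc₀, h1e]
end

section
/- Let n ≥ 1 and let x₁, …, xₙ be nonnegative reals with Σᵢ xᵢ ≤ 1. Define F(x) = (eˣ − 1)/e. Then 1 − ∏_{i=1}^{n} (1 − F(xᵢ)) ≥ (1 − e^{−1/e} − 1/(2e²)) · Σ_{i=1}^{n} xᵢ + Σ_{i=1}^{n} (e^{2xᵢ} − e^{xᵢ})/(2e²). -/
open Real Finset

private lemma taylor3 {x : ℝ} (hx : 0 ≤ x) : 1 + x + x^2/2 + x^3/6 ≤ Real.exp x := by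
  have h := Real.sum_le_exp_of_nonneg hx 4
  simp [Finset.sum_range_succ] at h
  norm_num [Nat.factorial] at h
  linarith [h]

private lemma exp_neg_ub {x : ℝ} (hx : 0 ≤ x) : Real.exp (-x) ≤ 1 - x + x^2/2 := by
  have h := taylor3 hx
  have h1 : Real.exp (-x) * Real.exp x = 1 := by rw [← Real.exp_add]; simp
  have h2 : Real.exp (-x) * (1 + x + x^2/2 + x^3/6) ≤ 1 := by
    calc Real.exp (-x) * (1 + x + x^2/2 + x^3/6) ≤ Real.exp (-x) * Real.exp x :=
          mul_le_mul_of_nonneg_left h (Real.exp_pos _).le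
      _ = 1 := h1
  nlinarith [pow_nonneg hx 3, pow_nonneg hx 4, pow_nonneg hx 5, Real.exp_pos (-x)]

private lemma sinh_ineq {x : ℝ} (hx : 0 ≤ x) : 1 + 2*x*Real.exp x ≤ Real.exp x ^ 2 := by
  have h1 := taylor3 hx
  have h2 := exp_neg_ub hx
  have h3 : Real.exp (-x) * Real.exp x = 1 := by rw [← Real.exp_add]; simp
  have h4 : 2*x ≤ Real.exp x - Real.exp (-x) := by nlinarith [pow_nonneg hx 3]
  nlinarith [Real.exp_pos x, Real.exp_pos (-x)]

private lemma log_cubic {t : ℝ} (h0 : 0 ≤ t) (h1 : t ≤ 0.64) :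
    t + t^2/2 + t^3/3 ≤ -Real.log (1 - t) := by
  have habs : |t| < 1 := by rw [abs_of_nonneg h0]; linarith
  have h := Real.abs_log_sub_add_sum_range_le habs 9
  rw [abs_of_nonneg h0] at h
  simp [Finset.sum_range_succ] at h
  have hlb := (abs_le.1 h).2
  norm_num at hlb
  have hpos : ∀ k : ℕ, 0 ≤ t^k := fun k => pow_nonneg h0 k
  have htail : t^10/(1-t) ≤ t^4/4 := by
    rw [div_le_iff₀ (by linarith : (0:ℝ) < 1 - t)]
    have h6 : t^6 ≤ 0.64^6 := pow_le_pow_left₀ h0 h1 6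
    have ht10 : t^10 = t^4 * t^6 := by ring
    rw [ht10]
    calc t^4 * t^6 ≤ t^4 * 0.64^6 := by nlinarith [hpos 4]
      _ ≤ t^4/4 * (1-t) := by nlinarith [hpos 4, hpos 5]
  linarith [hlb, htail, hpos 4, hpos 5, hpos 6, hpos 7, hpos 8, hpos 9]

private lemma crux {x : ℝ} (h0 : 0 ≤ x) (h1 : x ≤ 1) :
    (Real.exp (2*x) - Real.exp x - x)/(Real.exp 1)^2 ≤
      -Real.log (1 - (Real.exp x - 1)/Real.exp 1) - x/Real.exp 1 := by
  have hE1 : (2.7182818283:ℝ) < Real.exp 1 := Real.exp_one_gt_d9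
  have hE2 : Real.exp 1 < 2.7182818286 := Real.exp_one_lt_d9
  set E := Real.exp 1 with hE
  have hEpos : (0:ℝ) < E := Real.exp_pos 1
  set y : ℝ := Real.exp x - 1 with hy
  have hxy : x ≤ y := by have := Real.add_one_le_exp x; rw [hy]; linarith
  have hy0 : 0 ≤ y := le_trans h0 hxy
  have hyE : y ≤ E - 1 := by
    have : Real.exp x ≤ E := by rw [hE]; exact Real.exp_le_exp.2 h1
    rw [hy]; linarith
  set t : ℝ := (Real.exp x - 1)/E with htdef
  have hty : t = y/E := by rw [htdef, hy]
  have ht0 : 0 ≤ t := by rw [hty]; positivity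
  have ht64 : t ≤ 0.64 := by
    rw [hty, div_le_iff₀ hEpos]; nlinarith
  have hlog := log_cubic ht0 ht64
  have hsinh := sinh_ineq h0
  have hex : Real.exp x = 1 + y := by rw [hy]; ring
  have hL2 : y^2 ≤ 2*(1+y)*(y-x) := by nlinarith [hsinh, hex]
  have he2x : Real.exp (2*x) = (1+y)^2 := by
    rw [two_mul, Real.exp_add, hex]; ring
  have hnum : Real.exp (2*x) - Real.exp x - x = y + y^2 - x := by
    rw [he2x, hex]; ring
  rw [hnum]
  have hquad : 0 ≤ 3*E^2 - 6*E - (3*E-2)*y + 2*y^2 := by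
    nlinarith [sq_nonneg (4*y - 3*E + 2), hE1, sq_nonneg (E - 2.7182818283)]
  have hEE : 0 ≤ E^2 - E := by nlinarith
  have hgp : 0 ≤ (E^2-E)*(y-x) - E*y^2/2 + y^3/3 := by
    have hid : 6*(1+y)*((E^2-E)*(y-x) - E*y^2/2 + y^3/3)
        = 3*(E^2-E)*(2*(1+y)*(y-x) - y^2) + y^2*(3*E^2 - 6*E - (3*E-2)*y + 2*y^2) := by
      ring
    have hr1 : 0 ≤ 3*(E^2-E)*(2*(1+y)*(y-x) - y^2) := by
      apply mul_nonneg (by linarith) (by linarith)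
    have hr2 : 0 ≤ y^2*(3*E^2 - 6*E - (3*E-2)*y + 2*y^2) :=
      mul_nonneg (sq_nonneg y) hquad
    have h6 : (0:ℝ) < 6*(1+y) := by linarith
    have hprod : 0 ≤ 6*(1+y)*((E^2-E)*(y-x) - E*y^2/2 + y^3/3) := by
      rw [hid]; exact add_nonneg hr1 hr2
    exact (mul_nonneg_iff_of_pos_left h6).mp hprod
  have heq : (t + t^2/2 + t^3/3) - x/E - (y + y^2 - x)/E^2
      = ((E^2-E)*(y-x) - E*y^2/2 + y^3/3)/E^3 := by
    rw [hty]; field_simp; ring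
  have hfrac : 0 ≤ ((E^2-E)*(y-x) - E*y^2/2 + y^3/3)/E^3 :=
    div_nonneg hgp (by positivity)
  linarith [hlog, hfrac, heq.ge, heq.le]

private lemma exp_chord {t c : ℝ} (h0 : 0 ≤ t) (h1 : t ≤ 1) :
    Real.exp (-(t*c)) ≤ 1 - t + t * Real.exp (-c) := by
  have h := convexOn_exp.2 (Set.mem_univ (-c)) (Set.mem_univ 0)
    h0 (sub_nonneg.2 h1) (by ring : t + (1 - t) = 1)
  simp only [smul_eq_mul, mul_zero, add_zero, Real.exp_zero, mul_one] at h
  calc Real.exp (-(t*c)) = Real.exp (t * -c) := by ring_nf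
    _ ≤ t * Real.exp (-c) + (1-t) := h
    _ = 1 - t + t * Real.exp (-c) := by ring

private lemma numeric_key : 1/2 + 1/(2*Real.exp 1) ≤ Real.exp (-(1/Real.exp 1)) := by
  have hE1 : (2.7182818283:ℝ) < Real.exp 1 := Real.exp_one_gt_d9
  have hE2 : Real.exp 1 < 2.7182818286 := Real.exp_one_lt_d9
  have hEpos : (0:ℝ) < Real.exp 1 := Real.exp_pos 1
  set E := Real.exp 1 with hE
  set t : ℝ := 1 - 1/E with ht
  have hu1 : (0.3678794411:ℝ) ≤ 1/E := by rw [le_div_iff₀ hEpos]; nlinarith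
  have hu2 : 1/E ≤ 0.3678794412 := by rw [div_le_iff₀ hEpos]; nlinarith
  have ht0 : 0 ≤ t := by rw [ht]; linarith
  have h1 : 1 + t + t^2/2 + t^3/6 ≤ Real.exp t := taylor3 ht0
  have h2 : Real.exp (-(1/E)) = Real.exp t / E := by
    have hne : -(1/E) = t + (-1) := by rw [ht]; ring
    rw [hne, Real.exp_add, Real.exp_neg, hE, div_eq_mul_inv]
  have key : 1/2 + 1/(2*E) ≤ (1 + t + t^2/2 + t^3/6) / E := by
    have e1 : (1:ℝ)/(2*E) = (1/E)/2 := by field_simp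
    have e2 : (1 + t + t^2/2 + t^3/6) / E = (1 + t + t^2/2 + t^3/6) * (1/E) := by
      field_simp
    rw [e1, e2, ht]
    obtain ⟨u, hu⟩ : ∃ u, 1/E = u := ⟨_, rfl⟩
    rw [hu] at hu1 hu2 ⊢
    have hu0 : (0:ℝ) ≤ u := by linarith
    have h3 : (0.3678794411:ℝ)^3 ≤ u^3 := by
      apply pow_le_pow_left₀ (by norm_num) hu1
    have h2u : u^2 ≤ (0.3678794412:ℝ)^2 := pow_le_pow_left₀ hu0 hu2 2
    have h4 : u^4 ≤ (0.3678794412:ℝ)^4 := pow_le_pow_left₀ hu0 hu2 4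
    norm_num at h3 h2u h4
    nlinarith [h3, h2u, h4, hu1, hu2]
  calc 1/2 + 1/(2*E) ≤ (1 + t + t^2/2 + t^3/6) / E := key
    _ ≤ Real.exp t / E := by gcongr
    _ = Real.exp (-(1/E)) := h2.symm

-- exp(-x) ≤ 1 - F(x): E * exp(-x) + exp x ≤ E + 1
private lemma G_le_x {x : ℝ} (h0 : 0 ≤ x) (h1 : x ≤ 1) :
    Real.exp (-x) ≤ 1 - (Real.exp x - 1)/Real.exp 1 := by
  set E := Real.exp 1 with hE
  have hEpos : (0:ℝ) < E := Real.exp_pos 1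
  have c1 : Real.exp (-(x*1)) ≤ 1 - x + x * Real.exp (-1) := exp_chord h0 h1
  have c2 : Real.exp (-(x*(-1))) ≤ 1 - x + x * Real.exp (-(-1)) := exp_chord h0 h1
  have hinv : Real.exp (-1) = 1/E := by rw [Real.exp_neg, hE, one_div]
  rw [mul_one] at c1
  have c2' : Real.exp x ≤ 1 - x + x * E := by
    rw [show -(x*(-1)) = x by ring, neg_neg, ← hE] at c2; exact c2
  have hEinv : E * Real.exp (-1) = 1 := by rw [hE, ← Real.exp_add]; norm_num
  have hc1 : E * Real.exp (-x) ≤ E * (1 - x + x * Real.exp (-1)) :=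
    mul_le_mul_of_nonneg_left c1 hEpos.le
  have hexp : E * (1 - x + x * Real.exp (-1)) = E - E*x + x * (E * Real.exp (-1)) := by ring
  rw [hexp, hEinv, mul_one] at hc1
  have key : E * Real.exp (-x) + Real.exp x ≤ E + 1 := by linarith
  have h2 : (Real.exp x - 1)/E ≤ 1 - Real.exp (-x) := by
    rw [div_le_iff₀ hEpos]
    nlinarith [key]
  linarith

private lemma r_nonneg {x : ℝ} (h0 : 0 ≤ x) :
    0 ≤ Real.exp (2*x) - Real.exp x - x := by
  have h1 : Real.exp (2*x) = Real.exp x * Real.exp x := by rw [two_mul, Real.exp_add]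
  have h2 := Real.add_one_le_exp x
  nlinarith [Real.exp_pos x]

/-- For `n ≥ 1` and nonnegative reals `x₁, …, xₙ` with `Σ xᵢ ≤ 1`,
with `F(x) = (eˣ − 1)/e`, we have
`1 − ∏ (1 − F(xᵢ)) ≥ (1 − e^{−1/e} − 1/(2e²)) Σ xᵢ + Σ (e^{2xᵢ} − e^{xᵢ})/(2e²)`. -/
theorem stmt_6 (n : ℕ) (hn : 1 ≤ n) (x : Fin n → ℝ)
    (hx0 : ∀ i, 0 ≤ x i) (hsum : ∑ i, x i ≤ 1) :
    1 - ∏ i, (1 - (Real.exp (x i) - 1) / Real.exp 1) ≥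
      (1 - Real.exp (-1 / Real.exp 1) - 1 / (2 * (Real.exp 1) ^ 2)) * ∑ i, x i
        + ∑ i, (Real.exp (2 * x i) - Real.exp (x i)) / (2 * (Real.exp 1) ^ 2) := by
  have hE1 : (2.7182818283:ℝ) < Real.exp 1 := Real.exp_one_gt_d9
  have hE2 : Real.exp 1 < 2.7182818286 := Real.exp_one_lt_d9
  set E := Real.exp 1 with hE
  have hEpos : (0:ℝ) < E := Real.exp_pos 1
  have hE1' : (1:ℝ) < E := by linarith
  have hx1 : ∀ i, x i ≤ 1 := fun i =>
    le_trans (Finset.single_le_sum (fun j _ => hx0 j) (Finset.mem_univ i)) hsum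
  set T := ∑ i, x i with hTdef
  have hT0 : 0 ≤ T := Finset.sum_nonneg fun i _ => hx0 i
  have hinvE : 1/E < 1 := by rw [div_lt_one hEpos]; linarith
  have hQm0 : (0:ℝ) < 1 - 1/E := by linarith
  -- positivity of the factors
  have hFpos : ∀ i, 0 < 1 - (Real.exp (x i) - 1)/E := by
    intro i
    have h := Real.exp_le_exp.2 (hx1 i)
    rw [← hE] at h
    have : (Real.exp (x i) - 1)/E < 1 := by
      rw [div_lt_one hEpos]; linarith
    linarith
  set g : Fin n → ℝ := fun i => -Real.log (1 - (Real.exp (x i) - 1)/E) with hgdef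
  set Q : ℝ := ∑ i, (g i - x i/E) with hQdef
  -- product identity
  have hP : ∏ i, (1 - (Real.exp (x i) - 1)/E) = Real.exp (-(T/E)) * Real.exp (-Q) := by
    have h1 : ∀ i ∈ Finset.univ (α := Fin n),
        1 - (Real.exp (x i) - 1)/E = Real.exp (-(g i)) := by
      intro i _
      rw [hgdef]; simp only [neg_neg]
      rw [Real.exp_log (hFpos i)]
    rw [Finset.prod_congr rfl h1, ← Real.exp_sum]
    rw [← Real.exp_add]
    congr 1
    rw [hQdef, Finset.sum_sub_distrib, ← Finset.sum_div, ← hTdef]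
    simp [Finset.sum_neg_distrib]
    ring
  -- crux per-coordinate
  have hcrux : ∀ i, (Real.exp (2*x i) - Real.exp (x i) - x i)/E^2 ≤ g i - x i/E := by
    intro i
    have := crux (hx0 i) (hx1 i)
    rw [← hE] at this
    exact this
  have hr0 : ∀ i, 0 ≤ (Real.exp (2*x i) - Real.exp (x i) - x i)/E^2 := by
    intro i
    exact div_nonneg (r_nonneg (hx0 i)) (by positivity)
  have hq0 : ∀ i, 0 ≤ g i - x i/E := fun i => le_trans (hr0 i) (hcrux i)
  have hqup : ∀ i, g i - x i/E ≤ (1 - 1/E) * x i := by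
    intro i
    have h := G_le_x (hx0 i) (hx1 i)
    rw [← hE] at h
    have hg : g i ≤ x i := by
      rw [hgdef]
      simp only
      rw [neg_le]
      calc -x i = Real.log (Real.exp (-x i)) := by rw [Real.log_exp]
        _ ≤ Real.log (1 - (Real.exp (x i) - 1)/E) :=
            Real.log_le_log (Real.exp_pos _) h
    calc g i - x i/E ≤ x i - x i/E := sub_le_sub_right hg _
      _ = (1 - 1/E) * x i := by ring
  have hQ0 : 0 ≤ Q := by
    rw [hQdef]; exact Finset.sum_nonneg fun i _ => hq0 i
  have hQup : Q ≤ 1 - 1/E := by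
    rw [hQdef]
    calc ∑ i, (g i - x i/E) ≤ ∑ i, (1 - 1/E) * x i := Finset.sum_le_sum fun i _ => hqup i
      _ = (1 - 1/E) * T := by rw [← Finset.mul_sum, hTdef]
      _ ≤ 1 - 1/E := by nlinarith
  -- chord 1: 1 - exp(-(T/E)) ≥ (1-A) T with A = exp(-(1/E))
  set A : ℝ := Real.exp (-(1/E)) with hAdef
  have hc1 : (1 - A) * T ≤ 1 - Real.exp (-(T/E)) := by
    have h := exp_chord (c := 1/E) hT0 hsum
    have he : -(T * (1/E)) = -(T/E) := by ring
    rw [he] at h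
    nlinarith [h]
  -- chord 2
  set B : ℝ := Real.exp (-(1 - 1/E)) with hBdef
  have hc2 : Q/(1 - 1/E) * (1 - B) ≤ 1 - Real.exp (-Q) := by
    have ht0' : 0 ≤ Q/(1 - 1/E) := div_nonneg hQ0 hQm0.le
    have ht1' : Q/(1 - 1/E) ≤ 1 := by rw [div_le_one hQm0]; exact hQup
    have h := exp_chord (c := 1 - 1/E) ht0' ht1'
    rw [div_mul_cancel₀ Q hQm0.ne'] at h
    rw [← hBdef] at h
    linarith
  have hAB : A * B = 1/E := by
    rw [hAdef, hBdef, ← Real.exp_add]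
    have : -(1/E) + -(1 - 1/E) = -1 := by ring
    rw [this, Real.exp_neg, hE, one_div]
  have hAnum : 1/2 + 1/(2*E) ≤ A := by
    rw [hAdef, hE]; exact numeric_key
  have hA0 : 0 < A := Real.exp_pos _
  -- A(1-B) ≥ (1-1/E)/2
  have hA1B : (1 - 1/E)/2 ≤ A * (1 - B) := by
    have h1 : A * (1 - B) = A - A*B := by ring
    have h2 : (1:ℝ)/(2*E) = (1/E)/2 := by ring
    rw [h1, hAB]
    linarith [hAnum, h2.ge, h2.le]
  -- exp(-(T/E)) ≥ A
  have hTA : A ≤ Real.exp (-(T/E)) := by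
    rw [hAdef]
    apply Real.exp_le_exp.2
    have : T/E ≤ 1/E := by gcongr
    linarith
  have hexpQ1 : Real.exp (-Q) ≤ 1 := Real.exp_le_one_iff.2 (by linarith)
  -- combine: exp(-(T/E)) (1 - exp(-Q)) ≥ Q/2
  have hmid : Q/2 ≤ Real.exp (-(T/E)) * (1 - Real.exp (-Q)) := by
    have s1 : A * (Q/(1 - 1/E) * (1 - B)) ≤ A * (1 - Real.exp (-Q)) :=
      mul_le_mul_of_nonneg_left hc2 hA0.le
    have s2 : A * (1 - Real.exp (-Q)) ≤ Real.exp (-(T/E)) * (1 - Real.exp (-Q)) :=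
      mul_le_mul_of_nonneg_right hTA (by linarith)
    have s3 : Q/2 ≤ A * (Q/(1 - 1/E) * (1 - B)) := by
      have e1 : A * (Q/(1 - 1/E) * (1 - B)) = (Q/(1 - 1/E)) * (A * (1 - B)) := by ring
      rw [e1]
      have s4 : (Q/(1 - 1/E)) * ((1 - 1/E)/2) ≤ (Q/(1 - 1/E)) * (A * (1 - B)) :=
        mul_le_mul_of_nonneg_left hA1B (div_nonneg hQ0 hQm0.le)
      have e2 : (Q/(1 - 1/E)) * ((1 - 1/E)/2) = Q/2 := by
        rw [div_mul_div_comm, mul_comm Q (1 - 1/E), mul_div_mul_left Q 2 hQm0.ne']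
      linarith
    linarith
  -- Q/2 ≥ sum r
  have hc3 : ∑ i, (Real.exp (2*x i) - Real.exp (x i) - x i)/(2*E^2) ≤ Q/2 := by
    have h1 : ∀ i ∈ Finset.univ (α := Fin n),
        (Real.exp (2*x i) - Real.exp (x i) - x i)/(2*E^2) ≤ (g i - x i/E)/2 := by
      intro i _
      have := hcrux i
      have e1 : (Real.exp (2*x i) - Real.exp (x i) - x i)/(2*E^2)
          = ((Real.exp (2*x i) - Real.exp (x i) - x i)/E^2)/2 := by ring
      rw [e1]
      linarith
    calc ∑ i, (Real.exp (2*x i) - Real.exp (x i) - x i)/(2*E^2)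
        ≤ ∑ i, (g i - x i/E)/2 := Finset.sum_le_sum h1
      _ = Q/2 := by rw [hQdef, ← Finset.sum_div]
  -- rewrite RHS
  have hRHS : (1 - Real.exp (-1/E) - 1/(2*E^2)) * T
        + ∑ i, (Real.exp (2*x i) - Real.exp (x i))/(2*E^2)
      = (1 - A) * T + ∑ i, (Real.exp (2*x i) - Real.exp (x i) - x i)/(2*E^2) := by
    have hAe : Real.exp (-1/E) = A := by rw [hAdef, neg_div, one_div]
    have hsum_split : ∑ i, (Real.exp (2*x i) - Real.exp (x i))/(2*E^2)
        = (∑ i, (Real.exp (2*x i) - Real.exp (x i) - x i)/(2*E^2)) + T/(2*E^2) := by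
      rw [hTdef, Finset.sum_div, ← Finset.sum_add_distrib]
      apply Finset.sum_congr rfl
      intro i _
      ring
    rw [hAe, hsum_split]
    ring
  rw [ge_iff_le, hP, hRHS]
  have hsplit : 1 - Real.exp (-(T/E)) * Real.exp (-Q)
      = (1 - Real.exp (-(T/E))) + Real.exp (-(T/E)) * (1 - Real.exp (-Q)) := by ring
  rw [hsplit]
  have := hc1
  have := hmid
  have := hc3
  linarith
end

section
/- Let n ≥ 1 and let 0 ≤ x₁ ≤ x₂ ≤ ⋯ ≤ xₙ be reals with Σᵢ xᵢ ≤ 1. For each i set Aᵢ = e^{−xᵢ/e} and Bᵢ = 1 − (e^{xᵢ} − 1)/e. Then for every index j with xⱼ > 0, ∏_{i ≤ j} Bᵢ · ∏_{i > j} Aᵢ ≥ Bⱼ^{1/xⱼ}. -/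
open Real Finset

lemma stmt7_key1 {t s : ℝ} (ht : 0 ≤ t) (hts : t ≤ s) (hs : 0 < s) (hs1 : s ≤ 1) :
    (1 - (Real.exp s - 1) / Real.exp 1) ^ (t / s : ℝ) ≤
      1 - (Real.exp t - 1) / Real.exp 1 := by
  set l : ℝ := t / s with hl
  have hl0 : 0 ≤ l := div_nonneg ht hs.le
  have hl1 : l ≤ 1 := (div_le_one hs).2 hts
  set Bs : ℝ := 1 - (Real.exp s - 1) / Real.exp 1 with hBs
  have hE : (0:ℝ) < Real.exp 1 := Real.exp_pos 1
  have hBs0 : 0 < Bs := by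
    have h1 : Real.exp s ≤ Real.exp 1 := Real.exp_le_exp.2 hs1
    have : (Real.exp s - 1) / Real.exp 1 < 1 := by
      rw [div_lt_one hE]; linarith
    simp only [hBs]; linarith
  -- convexity of exp
  have hconv : Real.exp t ≤ l * Real.exp s + (1 - l) * Real.exp 0 := by
    have := convexOn_exp.2 (Set.mem_univ s) (Set.mem_univ (0:ℝ)) hl0
      (by linarith : (0:ℝ) ≤ 1 - l) (by ring)
    have hts' : l • s + (1 - l) • (0:ℝ) = t := by
      simp [hl, smul_eq_mul]
      field_simp
    rwa [hts', smul_eq_mul, smul_eq_mul] at this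
  rw [Real.exp_zero] at hconv
  -- step: B t ≥ l * Bs + (1 - l)
  have hstep : l * Bs + (1 - l) * 1 ≤ 1 - (Real.exp t - 1) / Real.exp 1 := by
    have h2 : (Real.exp t - 1) / Real.exp 1 ≤ (l * (Real.exp s - 1)) / Real.exp 1 := by
      apply div_le_div_of_nonneg_right _ hE.le
      nlinarith
    have h3 : (l * (Real.exp s - 1)) / Real.exp 1 = l * ((Real.exp s - 1) / Real.exp 1) := by
      ring
    simp only [hBs]
    rw [h3] at h2
    nlinarith
  calc Bs ^ l = Bs ^ l * 1 ^ (1 - l) := by rw [Real.one_rpow]; ring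
    _ ≤ l * Bs + (1 - l) * 1 :=
        Real.geom_mean_le_arith_mean2_weighted hl0 (by linarith) hBs0.le zero_le_one (by ring)
    _ ≤ _ := hstep

lemma stmt7_key2 {t s : ℝ} (hs : 0 < s) (hst : s ≤ t) (hs1 : s ≤ 1) :
    (1 - (Real.exp s - 1) / Real.exp 1) ^ (t / s : ℝ) ≤ Real.exp (-t / Real.exp 1) := by
  have hE : (0:ℝ) < Real.exp 1 := Real.exp_pos 1
  have hBs0 : 0 < 1 - (Real.exp s - 1) / Real.exp 1 := by
    have h1 : Real.exp s ≤ Real.exp 1 := Real.exp_le_exp.2 hs1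
    have : (Real.exp s - 1) / Real.exp 1 < 1 := by rw [div_lt_one hE]; linarith
    linarith
  have hBA : 1 - (Real.exp s - 1) / Real.exp 1 ≤ Real.exp (-s / Real.exp 1) := by
    have h1 : s + 1 ≤ Real.exp s := Real.add_one_le_exp s
    have h2 : -s / Real.exp 1 + 1 ≤ Real.exp (-s / Real.exp 1) := Real.add_one_le_exp _
    have h3 : s / Real.exp 1 ≤ (Real.exp s - 1) / Real.exp 1 :=
      div_le_div_of_nonneg_right (by linarith) hE.le
    rw [neg_div] at h2 ⊢
    linarith
  have hexp : (0:ℝ) ≤ t / s := div_nonneg (by linarith) hs.le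
  calc (1 - (Real.exp s - 1) / Real.exp 1) ^ (t / s : ℝ)
      ≤ (Real.exp (-s / Real.exp 1)) ^ (t / s : ℝ) :=
        Real.rpow_le_rpow hBs0.le hBA hexp
    _ = Real.exp (-s / Real.exp 1 * (t / s)) := (Real.exp_mul _ _).symm
    _ = Real.exp (-t / Real.exp 1) := by
        congr 1
        field_simp

/-- For `n ≥ 1` and `0 ≤ x₁ ≤ ⋯ ≤ xₙ` with `Σ xᵢ ≤ 1`, setting
`Aᵢ = e^{−xᵢ/e}` and `Bᵢ = 1 − (e^{xᵢ} − 1)/e`, for every index `j` with `xⱼ > 0`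
we have `∏_{i ≤ j} Bᵢ · ∏_{i > j} Aᵢ ≥ Bⱼ^{1/xⱼ}`. -/
theorem stmt_7 (n : ℕ) (hn : 1 ≤ n) (x : Fin n → ℝ)
    (hx0 : ∀ i, 0 ≤ x i) (hmono : Monotone x) (hsum : ∑ i, x i ≤ 1)
    (j : Fin n) (hj : 0 < x j) :
    (∏ i ∈ Finset.univ.filter (fun i => i ≤ j),
        (1 - (Real.exp (x i) - 1) / Real.exp 1)) *
      (∏ i ∈ Finset.univ.filter (fun i => j < i), Real.exp (-(x i) / Real.exp 1)) ≥
      (1 - (Real.exp (x j) - 1) / Real.exp 1) ^ (1 / x j : ℝ) := by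
  have hx1 : ∀ i, x i ≤ 1 := by
    intro i
    exact le_trans (Finset.single_le_sum (fun i _ => hx0 i) (Finset.mem_univ i)) hsum
  set c : ℝ := 1 - (Real.exp (x j) - 1) / Real.exp 1 with hc
  have hE : (0:ℝ) < Real.exp 1 := Real.exp_pos 1
  have hc0 : 0 < c := by
    have h1 : Real.exp (x j) ≤ Real.exp 1 := Real.exp_le_exp.2 (hx1 j)
    have : (Real.exp (x j) - 1) / Real.exp 1 < 1 := by rw [div_lt_one hE]; linarith
    simp only [hc]; linarith
  have hc1 : c ≤ 1 := by
    have h1 : 1 ≤ Real.exp (x j) := Real.one_le_exp (hx0 j)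
    have : 0 ≤ (Real.exp (x j) - 1) / Real.exp 1 := div_nonneg (by linarith) hE.le
    simp only [hc]; linarith
  -- bound each factor from below by c ^ (x i / x j)
  have h1 : ∏ i ∈ Finset.univ.filter (fun i => i ≤ j), c ^ (x i / x j : ℝ) ≤
      ∏ i ∈ Finset.univ.filter (fun i => i ≤ j),
        (1 - (Real.exp (x i) - 1) / Real.exp 1) := by
    apply Finset.prod_le_prod
    · intro i _; exact Real.rpow_nonneg hc0.le _
    · intro i hi
      simp only [Finset.mem_filter] at hi
      exact stmt7_key1 (hx0 i) (hmono hi.2) hj (hx1 j)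
  have h2 : ∏ i ∈ Finset.univ.filter (fun i => j < i), c ^ (x i / x j : ℝ) ≤
      ∏ i ∈ Finset.univ.filter (fun i => j < i), Real.exp (-(x i) / Real.exp 1) := by
    apply Finset.prod_le_prod
    · intro i _; exact Real.rpow_nonneg hc0.le _
    · intro i hi
      simp only [Finset.mem_filter] at hi
      exact stmt7_key2 hj (hmono hi.2.le) (hx1 j)
  have hQ1 : (0:ℝ) ≤ ∏ i ∈ Finset.univ.filter (fun i => i ≤ j), c ^ (x i / x j : ℝ) :=
    Finset.prod_nonneg fun i _ => Real.rpow_nonneg hc0.le _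
  have hQ2 : (0:ℝ) ≤ ∏ i ∈ Finset.univ.filter (fun i => j < i), c ^ (x i / x j : ℝ) :=
    Finset.prod_nonneg fun i _ => Real.rpow_nonneg hc0.le _
  have hmul : (∏ i ∈ Finset.univ.filter (fun i => i ≤ j), c ^ (x i / x j : ℝ)) *
      (∏ i ∈ Finset.univ.filter (fun i => j < i), c ^ (x i / x j : ℝ)) ≤
      (∏ i ∈ Finset.univ.filter (fun i => i ≤ j),
        (1 - (Real.exp (x i) - 1) / Real.exp 1)) *
      (∏ i ∈ Finset.univ.filter (fun i => j < i), Real.exp (-(x i) / Real.exp 1)) :=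
    mul_le_mul h1 h2 hQ2 (le_trans hQ1 h1)
  have hprodeq : (∏ i ∈ Finset.univ.filter (fun i => i ≤ j), c ^ (x i / x j : ℝ)) *
      (∏ i ∈ Finset.univ.filter (fun i => j < i), c ^ (x i / x j : ℝ)) =
      c ^ ((∑ i, x i) / x j : ℝ) := by
    have hsplit : (∏ i ∈ Finset.univ.filter (fun i => i ≤ j), c ^ (x i / x j : ℝ)) *
        (∏ i ∈ Finset.univ.filter (fun i => ¬ i ≤ j), c ^ (x i / x j : ℝ)) =
        ∏ i, c ^ (x i / x j : ℝ) := Finset.prod_filter_mul_prod_filter_not _ _ _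
    have hfe : (Finset.univ.filter (fun i : Fin n => ¬ i ≤ j)) =
        (Finset.univ.filter (fun i => j < i)) := by
      apply Finset.filter_congr; intro i _; simp [not_le]
    rw [← hfe, hsplit, ← Real.rpow_sum_of_pos hc0]
    congr 1
    rw [Finset.sum_div]
  rw [hprodeq] at hmul
  have hfinal : c ^ (1 / x j : ℝ) ≤ c ^ ((∑ i, x i) / x j : ℝ) := by
    apply Real.rpow_le_rpow_of_exponent_ge hc0 hc1
    exact div_le_div_of_nonneg_right hsum hj.le
  exact le_trans hfinal hmul
end

section
/- Define F(x) = (eˣ − 1)/e. The function x ↦ ln(1 − F(x))/x is decreasing on (0, 1]; moreover, for every x ∈ (0, 1], ln(1 − F(x))/x ≤ −1/e. -/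
/-!
Put `h x = log (1 - F x)`. As `1 - F` is concave and positive on `(-∞, 1]` and `log` is concave
and increasing, `h` is concave there, with `h 0 = 0`. Hence `h x / x` is the slope of the chord
of `h` from `0` to `x`, which decreases in `x` and is bounded above by `h' 0 = -1/e`.
-/

open Real Set

lemma ConcaveOn.log {E : Type*} [AddCommGroup E] [Module ℝ E] {s : Set E} {g : E → ℝ}
    (hg : ConcaveOn ℝ s g) (hpos : ∀ x ∈ s, 0 < g x) :
    ConcaveOn ℝ s fun x => Real.log (g x) := by
  refine ⟨hg.1, fun x hx y hy a b ha hb hab => ?_⟩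
  calc a • Real.log (g x) + b • Real.log (g y)
      ≤ Real.log (a • g x + b • g y) :=
        strictConcaveOn_log_Ioi.concaveOn.2 (hpos x hx) (hpos y hy) ha hb hab
    _ ≤ Real.log (g (a • x + b • y)) :=
        Real.log_le_log (strictConcaveOn_log_Ioi.concaveOn.1 (hpos x hx) (hpos y hy) ha hb hab)
          (hg.2 hx hy ha hb hab)

lemma slope_zero_eq_div_self {𝕜 : Type*} [Field 𝕜] {f : 𝕜 → 𝕜} (hf0 : f 0 = 0) :
    slope f 0 = fun x => f x / x := by
  funext x
  rw [slope_def_field, hf0, sub_zero, sub_zero]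

lemma ConcaveOn.antitoneOn_div_self {𝕜 : Type*} [Field 𝕜] [LinearOrder 𝕜]
    [IsStrictOrderedRing 𝕜] {s : Set 𝕜} {f : 𝕜 → 𝕜} (hf : ConcaveOn 𝕜 s f) (h0 : (0 : 𝕜) ∈ s)
    (hf0 : f 0 = 0) : AntitoneOn (fun x => f x / x) (s \ {0}) :=
  slope_zero_eq_div_self hf0 ▸ hf.slope_anti h0

lemma ConcaveOn.div_self_le_of_hasDerivAt {s : Set ℝ} {f : ℝ → ℝ} {f' x : ℝ}
    (hf : ConcaveOn ℝ s f) (h0 : (0 : ℝ) ∈ s) (hf0 : f 0 = 0) (hf' : HasDerivAt f f' 0)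
    (hx : x ∈ s) (hx0 : 0 < x) : f x / x ≤ f' := by
  simpa only [slope_zero_eq_div_self hf0] using hf.slope_le_of_hasDerivAt h0 hx hx0 hf'

lemma concaveOn_one_sub_expSubOne_div_exp_one :
    ConcaveOn ℝ univ fun x : ℝ => 1 - (exp x - 1) / exp 1 := by
  have hconvex : ConvexOn ℝ univ fun x : ℝ => (exp x - 1) / exp 1 := by
    simpa only [smul_eq_mul, div_eq_inv_mul, Pi.add_apply, ← sub_eq_add_neg] using
      (convexOn_exp.add_const (-1)).smul (inv_nonneg.2 (exp_pos 1).le)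
  exact (concaveOn_const 1 convex_univ).sub hconvex

lemma one_sub_expSubOne_div_exp_one_pos {x : ℝ} (hx : x ≤ 1) :
    0 < 1 - (exp x - 1) / exp 1 := by
  rw [sub_pos, div_lt_one (exp_pos 1)]
  linarith [exp_le_exp.2 hx]

lemma hasDerivAt_log_one_sub_expSubOne_div_exp_one :
    HasDerivAt (fun x : ℝ => log (1 - (exp x - 1) / exp 1)) (-1 / exp 1) 0 := by
  have hinner : HasDerivAt (fun x : ℝ => 1 - (exp x - 1) / exp 1) (-(exp 0 / exp 1)) 0 :=
    (((hasDerivAt_exp 0).sub_const 1).div_const (exp 1)).const_sub 1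
  simpa [neg_div] using hinner.log (by simp)

/-- With `F(x) = (eˣ − 1)/e`, the function `x ↦ ln(1 − F(x))/x` is
decreasing on `(0, 1]`, and for every `x ∈ (0, 1]`, `ln(1 − F(x))/x ≤ −1/e`. -/
theorem stmt_8 :
    AntitoneOn (fun x : ℝ => Real.log (1 - (Real.exp x - 1) / Real.exp 1) / x)
      (Set.Ioc 0 1) ∧
    ∀ x ∈ Set.Ioc (0 : ℝ) 1,
      Real.log (1 - (Real.exp x - 1) / Real.exp 1) / x ≤ -1 / Real.exp 1 := by
  have hconcave : ConcaveOn ℝ (Iic 1) fun x : ℝ => log (1 - (exp x - 1) / exp 1) :=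
    (concaveOn_one_sub_expSubOne_div_exp_one.subset (subset_univ _) (convex_Iic 1)).log
      fun _ => one_sub_expSubOne_div_exp_one_pos
  have h0 : (0 : ℝ) ∈ Iic 1 := mem_Iic.2 zero_le_one
  have hf0 : log (1 - (exp 0 - 1) / exp 1) = 0 := by simp
  exact ⟨(hconcave.antitoneOn_div_self h0 hf0).mono fun x hx => ⟨hx.2, hx.1.ne'⟩,
    fun x hx => hconcave.div_self_le_of_hasDerivAt h0 hf0
      hasDerivAt_log_one_sub_expSubOne_div_exp_one hx.2 hx.1⟩
end

section
/- For every x ∈ (0, 1], e^{−x/e} − e^{−x} ≤ 1 − e^{−(1−1/e)x} ≤ (1 − e^{−1})·x; consequently, ((e^{−1/e} − e^{−1})·x) / (e^{−x/e} − e^{−x}) ≥ (e^{−1/e} − e^{−1}) / (1 − e^{−1}). -/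
/-- For every `x ∈ (0, 1]`,
`e^{−x/e} − e^{−x} ≤ 1 − e^{−(1−1/e)x} ≤ (1 − e^{−1})x`, and consequently
`((e^{−1/e} − e^{−1})x)/(e^{−x/e} − e^{−x}) ≥ (e^{−1/e} − e^{−1})/(1 − e^{−1})`. -/
theorem stmt_12 (x : ℝ) (hx0 : 0 < x) (hx1 : x ≤ 1) :
    Real.exp (-x / Real.exp 1) - Real.exp (-x) ≤
        1 - Real.exp (-(1 - 1 / Real.exp 1) * x) ∧
    1 - Real.exp (-(1 - 1 / Real.exp 1) * x) ≤ (1 - Real.exp (-1)) * x ∧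
    ((Real.exp (-1 / Real.exp 1) - Real.exp (-1)) * x) /
        (Real.exp (-x / Real.exp 1) - Real.exp (-x)) ≥
      (Real.exp (-1 / Real.exp 1) - Real.exp (-1)) / (1 - Real.exp (-1)) := by
  have hepos : (0:ℝ) < Real.exp 1 := Real.exp_pos 1
  have he1 : (1:ℝ) < Real.exp 1 := by
    have := Real.exp_one_gt_d9; linarith
  have hinv : Real.exp (-1) = 1 / Real.exp 1 := by
    rw [Real.exp_neg, one_div]
  have hc : 0 < 1 - 1 / Real.exp 1 := by
    have : 1 / Real.exp 1 < 1 := by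
      rw [div_lt_one hepos]; exact he1
    linarith
  have key : Real.exp (-x) =
      Real.exp (-x / Real.exp 1) * Real.exp (-(1 - 1 / Real.exp 1) * x) := by
    rw [← Real.exp_add]
    congr 1
    field_simp
    ring
  have ht1 : Real.exp (-(1 - 1 / Real.exp 1) * x) ≤ 1 := by
    apply Real.exp_le_one_iff.mpr
    nlinarith
  have hs1 : Real.exp (-x / Real.exp 1) ≤ 1 := by
    apply Real.exp_le_one_iff.mpr
    have : 0 < x / Real.exp 1 := div_pos hx0 hepos
    rw [neg_div]; linarith
  have htpos : 0 < Real.exp (-(1 - 1 / Real.exp 1) * x) := Real.exp_pos _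
  have hspos : 0 < Real.exp (-x / Real.exp 1) := Real.exp_pos _
  have h1 : Real.exp (-x / Real.exp 1) - Real.exp (-x) ≤
      1 - Real.exp (-(1 - 1 / Real.exp 1) * x) := by
    rw [key]; nlinarith
  have h2 : 1 - Real.exp (-(1 - 1 / Real.exp 1) * x) ≤ (1 - Real.exp (-1)) * x := by
    have := Real.add_one_le_exp (-(1 - 1 / Real.exp 1) * x)
    rw [hinv]
    nlinarith
  refine ⟨h1, h2, ?_⟩
  have hDpos : 0 < Real.exp (-x / Real.exp 1) - Real.exp (-x) := by
    have : -x < -x / Real.exp 1 := by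
      rw [neg_div]
      have : x / Real.exp 1 < x := by
        rw [div_lt_iff₀ hepos]; nlinarith
      linarith
    have := Real.exp_lt_exp.mpr this
    linarith
  have hNpos : 0 ≤ Real.exp (-1 / Real.exp 1) - Real.exp (-1) := by
    have : (-1 : ℝ) ≤ -1 / Real.exp 1 := by
      rw [neg_div]
      have : 1 / Real.exp 1 ≤ 1 := by
        rw [div_le_one hepos]; linarith
      linarith
    have := Real.exp_le_exp.mpr this
    linarith
  have hden2 : 0 < 1 - Real.exp (-1) := by
    rw [hinv]; linarith
  rw [ge_iff_le, div_le_div_iff₀ hden2 hDpos]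
  have hchain : Real.exp (-x / Real.exp 1) - Real.exp (-x) ≤ (1 - Real.exp (-1)) * x :=
    le_trans h1 h2
  nlinarith
end

section
/- Let n ≥ 1 and let x₁, …, xₙ ∈ [0, 1) with Σᵢ xᵢ ≤ 1. Then ∏_{i=1}^{n} (1 − xᵢ) · e^{Σ_{i=1}^{n} xᵢ} ≤ 1 − (1/2)·Σ_{i=1}^{n} xᵢ². -/
/-!
Write the left side as `exp (∑ (log (1 - xᵢ) + xᵢ))`. The Taylor series of `log (1 - x)` has
only negative terms, so each summand is at most `-(xᵢ²/2 + xᵢ³/3)`. With `Q = ∑ xᵢ²` and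
`C = ∑ xᵢ³`, Cauchy–Schwarz and `∑ xᵢ ≤ 1` give `Q² ≤ C`, so the exponent is at most
`-(Q/2 + (4/3)(Q/2)²)`, and this is at most `log (1 - Q/2)` because `Q/2 ≤ 1/2`.
-/

open Real Finset

lemma sq_sum_sq_le_sum_mul_sum_pow_three {ι R : Type*} [CommSemiring R] [LinearOrder R]
    [IsStrictOrderedRing R] [ExistsAddOfLE R] (s : Finset ι) {x : ι → R}
    (hx : ∀ i ∈ s, 0 ≤ x i) :
    (∑ i ∈ s, x i ^ 2) ^ 2 ≤ (∑ i ∈ s, x i) * ∑ i ∈ s, x i ^ 3 :=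
  sum_sq_le_sum_mul_sum_of_sq_le_mul s hx (fun i hi => pow_nonneg (hx i hi) 3)
    fun i _ => le_of_eq (by ring)

lemma log_one_sub_add_le {x : ℝ} (h0 : 0 ≤ x) (h1 : x < 1) :
    log (1 - x) + x ≤ -(x ^ 2 / 2 + x ^ 3 / 3) := by
  have hseries := hasSum_pow_div_log_of_abs_lt_one (abs_lt.2 ⟨by linarith, h1⟩)
  have h := sum_le_hasSum (range 3) (fun i _ => by positivity) hseries
  norm_num [sum_range_succ] at h
  linarith

lemma neg_add_le_log_one_sub {y : ℝ} (h0 : 0 ≤ y) (h1 : y ≤ 1 / 2) :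
    -(y + 4 / 3 * y ^ 2) ≤ log (1 - y) := by
  have h := abs_log_sub_add_sum_range_le (x := y) (by rw [abs_of_nonneg h0]; linarith) 3
  rw [abs_of_nonneg h0] at h
  have hremainder : y ^ 4 / (1 - y) ≤ 5 / 6 * y ^ 2 - y ^ 3 / 3 := by
    rw [div_le_iff₀ (by linarith)]
    nlinarith [sq_nonneg y, mul_nonneg (sq_nonneg y) h0]
  have := (abs_le.1 h).1
  norm_num [sum_range_succ] at this
  linarith

lemma prod_one_sub_mul_exp_sum {ι : Type*} (s : Finset ι) {x : ι → ℝ} (hx : ∀ i ∈ s, x i < 1) :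
    (∏ i ∈ s, (1 - x i)) * exp (∑ i ∈ s, x i) = exp (∑ i ∈ s, (log (1 - x i) + x i)) := by
  rw [sum_add_distrib, exp_add, exp_sum s fun i => log (1 - x i)]
  congr 1
  exact prod_congr rfl fun i hi => (exp_log (by linarith [hx i hi])).symm

theorem stmt_13_general (n : ℕ) (x : Fin n → ℝ)
    (hx0 : ∀ i, 0 ≤ x i) (hx1 : ∀ i, x i < 1) (hsum : ∑ i, x i ≤ 1) :
    (∏ i, (1 - x i)) * Real.exp (∑ i, x i) ≤ 1 - (1 / 2) * ∑ i, (x i) ^ 2 := by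
  set Q := ∑ i, x i ^ 2
  set C := ∑ i, x i ^ 3
  have hQ1 : Q ≤ 1 :=
    (sum_le_sum fun i _ => pow_le_of_le_one (hx0 i) (hx1 i).le two_ne_zero).trans hsum
  have hQC : Q ^ 2 ≤ C :=
    (sq_sum_sq_le_sum_mul_sum_pow_three univ fun i _ => hx0 i).trans
      (mul_le_of_le_one_left (sum_nonneg fun i _ => pow_nonneg (hx0 i) 3) hsum)
  have hexponent : ∑ i, (log (1 - x i) + x i) ≤ log (1 - Q / 2) :=
    calc ∑ i, (log (1 - x i) + x i)
        ≤ ∑ i, -(x i ^ 2 / 2 + x i ^ 3 / 3) :=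
          sum_le_sum fun i _ => log_one_sub_add_le (hx0 i) (hx1 i)
      _ = -(Q / 2 + C / 3) := by rw [sum_neg_distrib, sum_add_distrib, ← sum_div, ← sum_div]
      _ ≤ -(Q / 2 + 4 / 3 * (Q / 2) ^ 2) := by linarith
      _ ≤ log (1 - Q / 2) :=
          neg_add_le_log_one_sub (by positivity) (by linarith)
  calc (∏ i, (1 - x i)) * exp (∑ i, x i)
      = exp (∑ i, (log (1 - x i) + x i)) := prod_one_sub_mul_exp_sum univ fun i _ => hx1 i
    _ ≤ exp (log (1 - Q / 2)) := exp_le_exp.2 hexponent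
    _ = 1 - 1 / 2 * Q := by rw [exp_log (by linarith)]; ring

/-- For `n ≥ 1` and `x₁, …, xₙ ∈ [0, 1)` with `Σ xᵢ ≤ 1`,
`∏ (1 − xᵢ) · e^{Σ xᵢ} ≤ 1 − (1/2) Σ xᵢ²`. -/
theorem stmt_13 (n : ℕ) (hn : 1 ≤ n) (x : Fin n → ℝ)
    (hx0 : ∀ i, 0 ≤ x i) (hx1 : ∀ i, x i < 1) (hsum : ∑ i, x i ≤ 1) :
    (∏ i, (1 - x i)) * Real.exp (∑ i, x i) ≤ 1 - (1 / 2) * ∑ i, (x i) ^ 2 :=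
  stmt_13_general n x hx0 hx1 hsum
end

section
/- Let β = (e^{−1/e} − e^{−1})/(1 − e^{−1}) and let γ = (1 − e^{−1/e}) − e^{−1}·(4β − 2β²) + (2β − β²). Then γ ≥ 0.509, and for every s ∈ [0, 1], (1 − e^{−1/e} − β/e)·s − (β − β²)·s·e^{−s} + (2β − β²)·(1 − e^{−s}) ≥ γ·s. -/
/-!
Since `-1 / e = -e⁻¹`, Taylor bounds for `exp` at `-0.36787944…` pin down `e^{-1/e}`, hence
`0.513 ≤ β ≤ 0.5131`; as `γ = 1 - e^{-1/e} + (2β - β²)(1 - 2/e)`, this gives `γ ≥ 0.509`.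
For the inequality put `B = β - β²`, `C = 2β - β²` and `h t = C (1 - e^{-t}) - B t e^{-t}`.
Then `h'' t = e^{-t} (2B - C - B t)` with `2B - C = -β²`, so `h` is concave on `t ≥ 0`; as
`h 0 = 0` this gives `h s ≥ s h 1` on `[0, 1]`, and `γ` is exactly `1 - e^{-1/e} - β/e + h 1`.
-/

open Real Set

theorem ConcaveOn.smul_le_map_smul {𝕜 E β : Type*} [Ring 𝕜] [PartialOrder 𝕜] [IsOrderedRing 𝕜]
    [AddCommMonoid E] [Module 𝕜 E] [AddCommMonoid β] [PartialOrder β] [Module 𝕜 β]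
    {s : Set E} {f : E → β} (hf : ConcaveOn 𝕜 s f) (h₀ : (0 : E) ∈ s) (hf₀ : f 0 = 0)
    {x : E} (hx : x ∈ s) {t : 𝕜} (ht₀ : 0 ≤ t) (ht₁ : t ≤ 1) : t • f x ≤ f (t • x) := by
  simpa [hf₀] using hf.2 h₀ hx (sub_nonneg.2 ht₁) ht₀ (sub_add_cancel 1 t)

theorem concaveOn_mul_one_sub_exp_neg_sub_mul_exp_neg {B C : ℝ} (hB : 0 ≤ B) (hBC : 2 * B ≤ C) :
    ConcaveOn ℝ (Ici 0) fun t => C * (1 - exp (-t)) - B * t * exp (-t) := by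
  have hexp (t : ℝ) : HasDerivAt (fun u => exp (-u)) (-exp (-t)) t := by
    simpa using (hasDerivAt_neg t).exp
  refine concaveOn_of_hasDerivWithinAt2_nonpos (convex_Ici 0)
    (f' := fun t => exp (-t) * (C - B + B * t)) (f'' := fun t => exp (-t) * (2 * B - C - B * t))
    (by fun_prop) (fun t _ => ?_) (fun t _ => ?_) (fun t ht => ?_)
  · exact ((((hexp t).const_sub 1).const_mul C).sub
      (((hasDerivAt_id' t).const_mul B).mul (hexp t))).congr_deriv (by ring) |>.hasDerivWithinAt
  · exact ((hexp t).mul (((hasDerivAt_id' t).const_mul B).const_add (C - B))).congr_deriv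
      (by ring) |>.hasDerivWithinAt
  · rw [interior_Ici] at ht
    have : 0 ≤ B * t := mul_nonneg hB (le_of_lt ht)
    exact mul_nonpos_of_nonneg_of_nonpos (exp_pos _).le (by linarith)

theorem exp_neg_exp_neg_one_gt : 0.69220 < exp (-exp (-1)) := by
  calc (0.69220 : ℝ) < exp (-0.3678794412) := by
        have h := Real.exp_bound (x := -0.3678794412) (by norm_num [abs_of_pos]) (n := 7)
          (by norm_num)
        norm_num [Finset.sum_range_succ, Nat.factorial, abs_le] at h
        linarith [h.1]
    _ < exp (-exp (-1)) := exp_lt_exp.2 (neg_lt_neg exp_neg_one_lt_d9)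

theorem exp_neg_exp_neg_one_lt : exp (-exp (-1)) < 0.69221 := by
  calc exp (-exp (-1)) < exp (-0.36787944116) := exp_lt_exp.2 (neg_lt_neg exp_neg_one_gt_d9)
    _ < 0.69221 := by
        have h := Real.exp_bound (x := -0.36787944116) (by norm_num [abs_of_pos]) (n := 7)
          (by norm_num)
        norm_num [Finset.sum_range_succ, Nat.factorial, abs_le] at h
        linarith [h.2]

/-- With `β = (e^{−1/e} − e^{−1})/(1 − e^{−1})` and
`γ = (1 − e^{−1/e}) − e^{−1}(4β − 2β²) + (2β − β²)`, we have `γ ≥ 0.509`, and for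
every `s ∈ [0, 1]`,
`(1 − e^{−1/e} − β/e)s − (β − β²)·s·e^{−s} + (2β − β²)(1 − e^{−s}) ≥ γ·s`. -/
theorem stmt_17 (β γ : ℝ)
    (hβ : β = (Real.exp (-1 / Real.exp 1) - Real.exp (-1)) / (1 - Real.exp (-1)))
    (hγ : γ = (1 - Real.exp (-1 / Real.exp 1))
        - Real.exp (-1) * (4 * β - 2 * β ^ 2) + (2 * β - β ^ 2)) :
    γ ≥ 0.509 ∧
    ∀ s : ℝ, 0 ≤ s → s ≤ 1 →
      (1 - Real.exp (-1 / Real.exp 1) - β / Real.exp 1) * s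
          - (β - β ^ 2) * s * Real.exp (-s)
          + (2 * β - β ^ 2) * (1 - Real.exp (-s)) ≥ γ * s := by
  have hinv : Real.exp 1 = (Real.exp (-1))⁻¹ := by rw [exp_neg, inv_inv]
  simp only [hinv, div_inv_eq_mul, neg_one_mul] at hβ hγ ⊢
  have hY₁ := exp_neg_one_gt_d9
  have hY₂ := exp_neg_one_lt_d9
  have hX₁ := exp_neg_exp_neg_one_gt
  have hX₂ := exp_neg_exp_neg_one_lt
  have hβ₁ : 0.513 ≤ β := by rw [hβ, le_div_iff₀ (by linarith)]; linarith
  have hβ₂ : β ≤ 0.5131 := by rw [hβ, div_le_iff₀ (by linarith)]; linarith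
  refine ⟨?_, fun s hs₀ hs₁ => ?_⟩
  · have hC : 0.762831 ≤ 2 * β - β ^ 2 := by nlinarith
    have hγ' : γ = 1 - exp (-exp (-1)) + (2 * β - β ^ 2) * (1 - 2 * exp (-1)) := by
      rw [hγ]; ring
    nlinarith [mul_le_mul_of_nonneg_right hC (by linarith : (0 : ℝ) ≤ 1 - 2 * exp (-1))]
  · have hconc := concaveOn_mul_one_sub_exp_neg_sub_mul_exp_neg (B := β - β ^ 2)
      (C := 2 * β - β ^ 2) (by nlinarith) (by nlinarith)
    have hchord := hconc.smul_le_map_smul self_mem_Ici (by simp) (mem_Ici.2 zero_le_one) hs₀ hs₁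
    simp only [smul_eq_mul, mul_one] at hchord
    rw [hγ]
    linear_combination hchord
end
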